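/- arXiv:2401.17250 — 12 statements merged into one kernel-verified Lean document; each statement's English description precedes it below -/
import Mathlib

section
/- If f : X ⟶ A is a bijective-on-objects functor and g : X ⟶ B is a discrete opfibration, then the induced functor ⟨f, g⟩ : X ⟶ A × B into the product category is a monomorphism in Cat. -/
open CategoryTheory

def IsDiscreteOpfibration {X B : Type*} [Category X] [Category B] (g : X ⥤ B) : Prop :=
  ∀ (x : X) (b : B) (u : g.obj x ⟶ b),
    ∃! p : Σ x' : X, x ⟶ x', ∃ h : g.obj p.1 = b, g.map p.2 = u ≫ eqToHom h.symm

lemma snd_eqToHom {A B : Type*} [Category A] [Category B] {p q : A × B} (h : p = q) :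
    (eqToHom h).2 = eqToHom (congrArg Prod.snd h) := by subst h; rfl

/-- If `f` is bijective on objects and `g` is a discrete opfibration, then the induced
functor `⟨f, g⟩ : X ⥤ A × B` is a monomorphism in `Cat`. -/
theorem stmt0 {X A B : Type} [SmallCategory X] [SmallCategory A] [SmallCategory B]
    (f : X ⥤ A) (g : X ⥤ B) (hf : Function.Bijective f.obj)
    (hg : IsDiscreteOpfibration g) :
    Mono (C := Cat) (X := Cat.of X) (Y := Cat.of (A × B)) (f.prod' g).toCatHom := by
  constructor
  intro Z u v h
  obtain ⟨u⟩ := u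
  obtain ⟨v⟩ := v
  change Z ⥤ X at u v
  replace h : u ⋙ f.prod' g = v ⋙ f.prod' g := congrArg Cat.Hom.toFunctor h
  apply Cat.ext
  have hobj : ∀ z : Z, u.obj z = v.obj z := by
    intro z
    apply hf.injective
    have := Functor.congr_obj h z
    exact congrArg Prod.fst this
  have hg2 : ∀ z : Z, g.obj (u.obj z) = g.obj (v.obj z) := fun z => congrArg g.obj (hobj z)
  have hmap : ∀ {z z' : Z} (φ : z ⟶ z'),
      u.map φ = eqToHom (hobj z) ≫ v.map φ ≫ eqToHom (hobj z').symm := by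
    intro z z' φ
    have hcong := Functor.congr_hom h φ
    have hgmap : g.map (u.map φ) = eqToHom (hg2 z) ≫ g.map (v.map φ) ≫ eqToHom (hg2 z').symm := by
      have h2 := congrArg Prod.snd hcong
      simp only [Functor.comp_obj, Functor.comp_map, Functor.prod'] at h2
      simpa [snd_eqToHom] using h2
    obtain ⟨p, hp, hun⟩ := hg (u.obj z) (g.obj (u.obj z')) (g.map (u.map φ))
    have h1 : (⟨u.obj z', u.map φ⟩ : Σ x' : X, u.obj z ⟶ x') =
        ⟨v.obj z', eqToHom (hobj z) ≫ v.map φ⟩ := by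
      have e1 := hun ⟨u.obj z', u.map φ⟩ ⟨rfl, by simp⟩
      have e2 := hun ⟨v.obj z', eqToHom (hobj z) ≫ v.map φ⟩ ?_
      · exact e1.trans e2.symm
      · refine ⟨(hg2 z').symm, ?_⟩
        simp [hgmap, eqToHom_map, Functor.map_comp]
    replace h1 := Sigma.ext_iff.mp h1
    exact (conj_eqToHom_iff_heq _ _ rfl (hobj z')).2 h1.2 |>.trans (by simp only [eqToHom_refl, Category.id_comp, Category.assoc])
  exact CategoryTheory.Functor.ext hobj fun z z' φ => hmap φ
end

section
/- Given a delta lens (f, φ) : A ⇸ B, the composite of the identity-on-objects inclusion π_A : Λ(f, φ) ⟶ A of the wide subcategory of chosen lifts with f is a discrete opfibration Λ(f, φ) ⟶ B. -/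
open CategoryTheory

structure DeltaLens {A B : Type*} [Category A] [Category B] (f : A ⥤ B) where
  tgt : ∀ (a : A) {b : B}, (f.obj a ⟶ b) → A
  lift : ∀ (a : A) {b : B} (u : f.obj a ⟶ b), a ⟶ tgt a u
  tgt_obj : ∀ (a : A) {b : B} (u : f.obj a ⟶ b), f.obj (tgt a u) = b
  map_lift : ∀ (a : A) {b : B} (u : f.obj a ⟶ b),
    f.map (lift a u) = u ≫ eqToHom (tgt_obj a u).symm
  tgt_id : ∀ a : A, tgt a (𝟙 (f.obj a)) = a
  lift_id : ∀ a : A, lift a (𝟙 (f.obj a)) = eqToHom (tgt_id a).symm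
  tgt_comp : ∀ (a : A) {b c : B} (u : f.obj a ⟶ b) (v : b ⟶ c),
    tgt a (u ≫ v) = tgt (tgt a u) (eqToHom (tgt_obj a u) ≫ v)
  lift_comp : ∀ (a : A) {b c : B} (u : f.obj a ⟶ b) (v : b ⟶ c),
    lift a (u ≫ v) =
      lift a u ≫ lift (tgt a u) (eqToHom (tgt_obj a u) ≫ v) ≫ eqToHom (tgt_comp a u v).symm
/-- `w` is one of the chosen lifts of the delta lens `L`. -/
def DeltaLens.IsChosenLift {A B : Type*} [Category A] [Category B] {f : A ⥤ B}
    (L : DeltaLens f) {a a' : A} (w : a ⟶ a') : Prop :=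
  ∃ (b : B) (u : f.obj a ⟶ b) (h : L.tgt a u = a'), L.lift a u = w ≫ eqToHom h.symm

private lemma sigma_eq_aux {A : Type} [SmallCategory A] {a x y : A} (h : x = y)
    (w : a ⟶ y) : (⟨y, w⟩ : Σ a' : A, a ⟶ a') = ⟨x, w ≫ eqToHom h.symm⟩ := by
  subst h; simp

/-- The restriction of `f` to the wide subcategory `Λ(f, φ)` of chosen lifts is a
discrete opfibration: every `u : f.obj a ⟶ b` has a unique lift with domain `a`
that is a chosen lift. -/
theorem stmt4 {A B : Type} [SmallCategory A] [SmallCategory B] {f : A ⥤ B}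
    (L : DeltaLens f) :
    ∀ (a : A) (b : B) (u : f.obj a ⟶ b),
      ∃! p : Σ a' : A, a ⟶ a',
        L.IsChosenLift p.2 ∧ ∃ h : f.obj p.1 = b, f.map p.2 = u ≫ eqToHom h.symm := by

  intro a b u
  refine ⟨⟨L.tgt a u, L.lift a u⟩, ⟨⟨b, u, rfl, by simp⟩, L.tgt_obj a u, L.map_lift a u⟩, ?_⟩
  rintro ⟨a', w⟩ ⟨⟨b', u', hT, hL⟩, hb, hw⟩
  have hb' : b' = b := by
    have := L.tgt_obj a u'
    rw [hT, hb] at this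
    exact this.symm
  subst hb'
  have hu : u' = u := by
    have h1 := L.map_lift a u'
    rw [hL] at h1
    simp only [Functor.map_comp, hw, eqToHom_map, Category.assoc, eqToHom_trans,
      cancel_mono] at h1
    exact h1.symm
  subst hu
  exact (sigma_eq_aux hT w).trans (by rw [← hL])
end

section
/- Given a commutative triangle of functors f ∘ ψ = p where ψ : X ⟶ A is bijective-on-objects and p : X ⟶ B is a discrete opfibration, the functor f : A ⟶ B admits a delta lens structure, with lifts defined by φ(a, u) = ψ(θ(ψ⁻¹(a), u)) where θ denotes the unique lifts of the discrete opfibration p. -/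
open CategoryTheory

/-! The unique lifts of a discrete opfibration form a delta lens: the identity and
composition laws hold because both sides are lifts of the same morphism. A delta lens on
`ψ ⋙ f` then descends to `f` when `ψ` is bijective on objects, by lifting at `a` from
`ψ⁻¹ a` and pushing the lift forward along `ψ`; injectivity of `ψ` on objects makes the
lift at `ψ x` the image of the lift at `x`, which gives the laws. -/

namespace IsDiscreteOpfibration

variable {X B : Type*} [Category X] [Category B] {g : X ⥤ B} (hp : IsDiscreteOpfibration g)

noncomputable def liftTgt (x : X) {b : B} (u : g.obj x ⟶ b) : X :=
  (hp x b u).exists.choose.1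

noncomputable def lift (x : X) {b : B} (u : g.obj x ⟶ b) : x ⟶ hp.liftTgt x u :=
  (hp x b u).exists.choose.2

lemma obj_liftTgt (x : X) {b : B} (u : g.obj x ⟶ b) : g.obj (hp.liftTgt x u) = b :=
  (hp x b u).exists.choose_spec.choose

lemma map_lift (x : X) {b : B} (u : g.obj x ⟶ b) :
    g.map (hp.lift x u) = u ≫ eqToHom (hp.obj_liftTgt x u).symm :=
  (hp x b u).exists.choose_spec.choose_spec

lemma lift_unique {x x' : X} {b : B} (u : g.obj x ⟶ b) (w : x ⟶ x') (h : g.obj x' = b)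
    (hw : g.map w = u ≫ eqToHom h.symm) :
    ∃ e : hp.liftTgt x u = x', hp.lift x u = w ≫ eqToHom e.symm := by
  have hchosen : (⟨hp.liftTgt x u, hp.lift x u⟩ : Σ y, x ⟶ y) = ⟨x', w⟩ :=
    (hp x b u).unique ⟨hp.obj_liftTgt x u, hp.map_lift x u⟩ ⟨h, hw⟩
  obtain ⟨e, he⟩ := Sigma.mk.inj_iff.mp hchosen
  refine ⟨e, ?_⟩
  cases e
  simpa using eq_of_heq he

lemma exists_lift_id_eq (x : X) :
    ∃ e : hp.liftTgt x (𝟙 (g.obj x)) = x, hp.lift x (𝟙 (g.obj x)) = eqToHom e.symm := by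
  simpa using hp.lift_unique (𝟙 (g.obj x)) (𝟙 x) rfl (by simp)

lemma exists_lift_comp_eq (x : X) {b c : B} (u : g.obj x ⟶ b) (v : b ⟶ c) :
    ∃ e : hp.liftTgt x (u ≫ v) =
        hp.liftTgt (hp.liftTgt x u) (eqToHom (hp.obj_liftTgt x u) ≫ v),
      hp.lift x (u ≫ v) = hp.lift x u ≫
        hp.lift (hp.liftTgt x u) (eqToHom (hp.obj_liftTgt x u) ≫ v) ≫ eqToHom e.symm := by
  simpa using hp.lift_unique (u ≫ v)
    (hp.lift x u ≫ hp.lift (hp.liftTgt x u) (eqToHom (hp.obj_liftTgt x u) ≫ v))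
    (hp.obj_liftTgt _ _) (by simp [map_lift])

noncomputable def deltaLens : DeltaLens g where
  tgt := hp.liftTgt
  lift := hp.lift
  tgt_obj := hp.obj_liftTgt
  map_lift := hp.map_lift
  tgt_id x := (hp.exists_lift_id_eq x).fst
  lift_id x := (hp.exists_lift_id_eq x).snd
  tgt_comp x _ _ u v := (hp.exists_lift_comp_eq x u v).fst
  lift_comp x _ _ u v := (hp.exists_lift_comp_eq x u v).snd

end IsDiscreteOpfibration

namespace DeltaLens

variable {X A B : Type*} [Category X] [Category A] [Category B]
  (ψ : X ⥤ A) {f : A ⥤ B} (hψ : Function.Bijective ψ.obj) (L : DeltaLens (ψ ⋙ f))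

noncomputable def ofCompTgt (a : A) {b : B} (u : f.obj a ⟶ b) : A :=
  ψ.obj (L.tgt (Function.surjInv hψ.surjective a)
    (eqToHom (congrArg f.obj (Function.surjInv_eq hψ.surjective a)) ≫ u))

noncomputable def ofCompLift (a : A) {b : B} (u : f.obj a ⟶ b) : a ⟶ ofCompTgt ψ hψ L a u :=
  eqToHom (Function.surjInv_eq hψ.surjective a).symm ≫
    ψ.map (L.lift (Function.surjInv hψ.surjective a)
      (eqToHom (congrArg f.obj (Function.surjInv_eq hψ.surjective a)) ≫ u))

variable {ψ L}

lemma obj_ofCompTgt (a : A) {b : B} (u : f.obj a ⟶ b) : f.obj (ofCompTgt ψ hψ L a u) = b :=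
  L.tgt_obj _ _

/- `u'` comes with an equation instead of being written out, since a morphism cannot be
rewritten inside the dependent `L.lift`. -/
lemma exists_ofCompLift_eq {x : X} {a : A} (hx : ψ.obj x = a) {b : B} (u : f.obj a ⟶ b)
    (u' : f.obj (ψ.obj x) ⟶ b) (hu : u' = eqToHom (congrArg f.obj hx) ≫ u) :
    ∃ e : ofCompTgt ψ hψ L a u = ψ.obj (L.tgt x u'),
      ofCompLift ψ hψ L a u = eqToHom hx.symm ≫ ψ.map (L.lift x u') ≫ eqToHom e.symm := by
  obtain rfl : Function.surjInv hψ.surjective a = x :=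
    hψ.injective ((Function.surjInv_eq hψ.surjective a).trans hx.symm)
  subst hu
  exact ⟨rfl, by rw [← Category.assoc]; exact (Category.comp_id _).symm⟩

lemma exists_ofCompLift_obj_eq (x : X) {b : B} (u : f.obj (ψ.obj x) ⟶ b) :
    ∃ e : ofCompTgt ψ hψ L (ψ.obj x) u = ψ.obj (L.tgt x u),
      ofCompLift ψ hψ L (ψ.obj x) u = ψ.map (L.lift x u) ≫ eqToHom e.symm := by
  simpa using exists_ofCompLift_eq hψ rfl u u (by simp)

variable (ψ L) in
noncomputable def ofComp : DeltaLens f where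
  tgt := ofCompTgt ψ hψ L
  lift := ofCompLift ψ hψ L
  tgt_obj := obj_ofCompTgt hψ
  map_lift a _ u := by
    obtain ⟨x, rfl⟩ := hψ.surjective a
    obtain ⟨e, he⟩ := exists_ofCompLift_obj_eq hψ (L := L) x u
    rw [he, Functor.map_comp, ← Functor.comp_map, L.map_lift]
    simp [eqToHom_map]
  tgt_id a := by
    obtain ⟨x, rfl⟩ := hψ.surjective a
    obtain ⟨e, -⟩ := exists_ofCompLift_obj_eq hψ (L := L) x (𝟙 _)
    rw [e]
    exact congrArg ψ.obj (L.tgt_id x)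
  lift_id a := by
    obtain ⟨x, rfl⟩ := hψ.surjective a
    obtain ⟨e, he⟩ := exists_ofCompLift_obj_eq hψ (L := L) x (𝟙 _)
    have hid := L.lift_id x
    dsimp only [Functor.comp_obj] at hid
    rw [he, hid]
    simp [eqToHom_map]
  tgt_comp a _ _ u v := by
    obtain ⟨x, rfl⟩ := hψ.surjective a
    obtain ⟨e, -⟩ := exists_ofCompLift_obj_eq hψ (L := L) x (u ≫ v)
    obtain ⟨e₁, -⟩ := exists_ofCompLift_obj_eq hψ (L := L) x u
    obtain ⟨e₂, -⟩ := exists_ofCompLift_eq hψ (L := L) e₁.symm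
      (eqToHom (obj_ofCompTgt hψ _ u) ≫ v) (eqToHom (L.tgt_obj x u) ≫ v) (by simp)
    rw [e, e₂, L.tgt_comp]
  lift_comp a _ _ u v := by
    obtain ⟨x, rfl⟩ := hψ.surjective a
    obtain ⟨e, he⟩ := exists_ofCompLift_obj_eq hψ (L := L) x (u ≫ v)
    obtain ⟨e₁, he₁⟩ := exists_ofCompLift_obj_eq hψ (L := L) x u
    obtain ⟨e₂, he₂⟩ := exists_ofCompLift_eq hψ (L := L) e₁.symm
      (eqToHom (obj_ofCompTgt hψ _ u) ≫ v) (eqToHom (L.tgt_obj x u) ≫ v) (by simp)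
    rw [he, he₁, he₂, L.lift_comp]
    simp [eqToHom_map]

lemma exists_ofComp_lift_obj_eq_map {x x' : X} {b : B} {u : f.obj (ψ.obj x) ⟶ b} {w : x ⟶ x'}
    (hw : ∃ e : L.tgt x u = x', L.lift x u = w ≫ eqToHom e.symm) :
    ∃ e : (ofComp ψ hψ L).tgt (ψ.obj x) u = ψ.obj x',
      (ofComp ψ hψ L).lift (ψ.obj x) u = ψ.map w ≫ eqToHom e.symm := by
  obtain ⟨rfl, hw⟩ := hw
  obtain ⟨e, he⟩ := exists_ofCompLift_obj_eq hψ (L := L) x u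
  exact ⟨e, he.trans (by simp [hw]; rfl)⟩

end DeltaLens

/-- Given `ψ ⋙ f = p` with `ψ` bijective on objects and `p` a discrete opfibration,
`f` admits a delta lens structure whose chosen lifts are images under `ψ` of the
unique lifts of `p`. -/
theorem stmt5 {X A B : Type} [SmallCategory X] [SmallCategory A] [SmallCategory B]
    (ψ : X ⥤ A) (f : A ⥤ B) (p : X ⥤ B)
    (hψ : Function.Bijective ψ.obj) (hcomm : ψ ⋙ f = p)
    (hp : IsDiscreteOpfibration p) :
    ∃ L : DeltaLens f,
      ∀ (x x' : X) (b : B) (u : f.obj (ψ.obj x) ⟶ b) (w : x ⟶ x')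
        (h : f.obj (ψ.obj x') = b),
        f.map (ψ.map w) = u ≫ eqToHom h.symm →
        ∃ h' : L.tgt (ψ.obj x) u = ψ.obj x',
          L.lift (ψ.obj x) u = ψ.map w ≫ eqToHom h'.symm := by
  subst hcomm
  exact ⟨DeltaLens.ofComp ψ hψ hp.deltaLens, fun x x' b u w h hw =>
    DeltaLens.exists_ofComp_lift_obj_eq_map hψ (hp.lift_unique u w h hw)⟩
end

section
/- The underlying left adjoint of a split coreflection is an initial functor. -/
open CategoryTheory

structure SplitCoreflection (A B : Type*) [Category A] [Category B] where
  f : A ⥤ B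
  q : B ⥤ A
  ε : q ⋙ f ⟶ 𝟭 B
  qf : f ⋙ q = 𝟭 A
  q_ε : ∀ x : B, q.map (ε.app x) = eqToHom (Functor.congr_obj qf (q.obj x))
  ε_f : ∀ a : A, ε.app (f.obj a) = eqToHom (congrArg f.obj (Functor.congr_obj qf a))

/-- The underlying left adjoint of a split coreflection is an initial functor. -/
theorem stmt7 {A B : Type} [SmallCategory A] [SmallCategory B]
    (S : SplitCoreflection A B) : S.f.Initial := by
  constructor
  intro b
  -- the distinguished object: q b with ε.app b
  let X₀ : CostructuredArrow S.f b := CostructuredArrow.mk (S.ε.app b)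
  have key : ∀ X : CostructuredArrow S.f b, Nonempty (X ⟶ X₀) := by
    intro X
    refine ⟨CostructuredArrow.homMk
      (eqToHom (Functor.congr_obj S.qf X.left).symm ≫ S.q.map X.hom) ?_⟩
    have nat : S.f.map (S.q.map X.hom) ≫ S.ε.app b
        = S.ε.app (S.f.obj X.left) ≫ X.hom := S.ε.naturality X.hom
    simp only [X₀, CostructuredArrow.mk_hom_eq_self, Functor.map_comp, Category.assoc,
      eqToHom_map]
    rw [nat, S.ε_f]; simp
  have nonempty : Nonempty (CostructuredArrow S.f b) := ⟨X₀⟩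
  refine zigzag_isConnected fun X Y => ?_
  exact (Relation.ReflTransGen.single (show Zag X X₀ from Or.inl (key X))).trans
      (Relation.ReflTransGen.single (show Zag X₀ Y from Or.inr (key Y)))
end

section
/- Let A₀ be a discrete category. A functor f : A₀ ⟶ X is initial if and only if f extends to a split coreflection, i.e., there exist a functor q : X ⟶ A₀ and a natural transformation ε : f ∘ q ⟹ 1_X with q ∘ f = 1_{A₀}, q · ε = 1_q, and ε · f = 1_f. -/
open CategoryTheory

section
variable {I : Type} {X : Type} [SmallCategory X] (f : Discrete I ⥤ X)

lemma csa_eq_of_hom {x : X} {j j' : CostructuredArrow f x} (g : j ⟶ j') : j = j' := by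
  obtain ⟨⟨a⟩, ⟨⟨⟩⟩, u⟩ := j
  obtain ⟨⟨a'⟩, ⟨⟨⟩⟩, u'⟩ := j'
  obtain ⟨⟨h⟩⟩ := g.left
  obtain rfl : a = a' := h
  have w := g.w
  simp at w
  subst w
  rfl

lemma csa_hom_of_eq {x : X} {j j' : CostructuredArrow f x} (h : j = j') :
    j.hom = eqToHom (by rw [h]) ≫ j'.hom := by subst h; simp

lemma csa_subsingleton (hf : f.Initial) {x : X} (j j' : CostructuredArrow f x) : j = j' := by
  haveI := hf.out x
  exact constant_of_preserves_morphisms (id : CostructuredArrow f x → CostructuredArrow f x)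
    (fun _ _ g => csa_eq_of_hom f g) j j'

noncomputable def mkSC (hf : f.Initial) : SplitCoreflection (Discrete I) X := by
  haveI h : ∀ x : X, IsConnected (CostructuredArrow f x) := hf.out
  let P : ∀ x : X, CostructuredArrow f x := fun x => Classical.arbitrary _
  have uniq : ∀ (x : X) (j : CostructuredArrow f x), j = P x :=
    fun x j => csa_subsingleton f hf j (P x)
  have qobj_eq : ∀ {x y : X} (h : x ⟶ y), (P x).left = (P y).left := by
    intro x y h
    have := uniq y (CostructuredArrow.mk ((P x).hom ≫ h))
    exact congrArg (fun j : CostructuredArrow f y => j.left) this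
  refine
    { f := f
      q := { obj := fun x => (P x).left
             map := fun {x y} h => eqToHom (qobj_eq h)
             map_id := fun x => Subsingleton.elim _ _
             map_comp := fun g h => Subsingleton.elim _ _ }
      ε := { app := fun x => (P x).hom
             naturality := ?_ }
      qf := ?_
      q_ε := fun x => Subsingleton.elim _ _
      ε_f := ?_ }
  · intro x y h
    have e := csa_hom_of_eq f (uniq y (CostructuredArrow.mk ((P x).hom ≫ h)))
    simp only [CostructuredArrow.mk_hom_eq_self] at e
    simp only [Functor.comp_map, Functor.id_map, eqToHom_map]
    rw [e]
  · apply CategoryTheory.Functor.ext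
    · intro a b g
      exact Subsingleton.elim _ _
    · intro a
      exact (congrArg (fun j : CostructuredArrow f (f.obj a) => j.left) (uniq (f.obj a) (CostructuredArrow.mk (𝟙 (f.obj a))))).symm
  · intro a
    have e := csa_hom_of_eq f (uniq (f.obj a) (CostructuredArrow.mk (𝟙 (f.obj a))))
    simp only [CostructuredArrow.mk_hom_eq_self] at e
    have e2 := (eqToHom_comp_iff _ _ _).mp e.symm
    show (P (f.obj a)).hom = _
    rw [e2]
    simp

end

section
variable {I : Type} {X : Type} [SmallCategory X]

lemma initial_of_SC (S : SplitCoreflection (Discrete I) X) : S.f.Initial := by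
  constructor
  intro x
  let j0 : CostructuredArrow S.f x := CostructuredArrow.mk (S.ε.app x)
  have toj0 : ∀ j : CostructuredArrow S.f x, Nonempty (j ⟶ j0) := by
    intro j
    refine ⟨CostructuredArrow.homMk
      (eqToHom (Functor.congr_obj S.qf j.left).symm ≫ S.q.map j.hom) ?_⟩
    have nat : S.f.map (S.q.map j.hom) ≫ S.ε.app x = S.ε.app (S.f.obj j.left) ≫ j.hom :=
      S.ε.naturality j.hom
    have hef := S.ε_f j.left
    simp only [CostructuredArrow.mk_hom_eq_self, Functor.map_comp, eqToHom_map,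
      Category.assoc, j0]
    rw [nat, hef]
    simp
  haveI : Nonempty (CostructuredArrow S.f x) := ⟨j0⟩
  apply zigzag_isConnected
  intro j1 j2
  obtain ⟨g1⟩ := toj0 j1
  obtain ⟨g2⟩ := toj0 j2
  exact (Relation.ReflTransGen.single (Zag.of_hom g1)).trans
    (Relation.ReflTransGen.single (Zag.of_inv g2))

end

/-- A functor from a discrete category is initial iff it extends to a split
coreflection. -/
theorem stmt8 {I : Type} {X : Type} [SmallCategory X] (f : Discrete I ⥤ X) :
    f.Initial ↔ ∃ S : SplitCoreflection (Discrete I) X, S.f = f := by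
  constructor
  · intro hf
    exact ⟨mkSC f hf, rfl⟩
  · rintro ⟨S, rfl⟩
    exact initial_of_SC S
end

section
/- Twisted coreflections are closed under composition: if (f ⊣ q, ε) : A ⇸ B and (g ⊣ p, ζ) : B ⇸ C are twisted coreflections, then the composite split coreflection (g f ⊣ p q, θ), with θ_x = ζ_x ∘ g(ε_{p x}), is a twisted coreflection. -/
open CategoryTheory

/-- A morphism "is an identity" if it is an `eqToHom`. -/
def IsIdLike {C : Type*} [Category C] {x y : C} (w : x ⟶ y) : Prop :=
  ∃ h : x = y, w = eqToHom h
/-- A split coreflection is twisted if every morphism whose image under `q` is not an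
identity factors uniquely through the counit as in the twisted condition. -/
def SplitCoreflection.IsTwisted {A B : Type*} [Category A] [Category B]
    (S : SplitCoreflection A B) : Prop :=
  ∀ {x y : B} (u : x ⟶ y), ¬ IsIdLike (S.q.map u) →
    ∃! uh : x ⟶ S.f.obj (S.q.obj x),
      S.ε.app x ≫ uh = 𝟙 (S.f.obj (S.q.obj x)) ∧
      u = uh ≫ S.f.map (S.q.map u) ≫ S.ε.app y

/-- Twisted coreflections are closed under composition. -/
theorem stmt10 {A B C : Type} [SmallCategory A] [SmallCategory B] [SmallCategory C]
    (S : SplitCoreflection A B) (T : SplitCoreflection B C)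
    (U : SplitCoreflection A C)
    (hf : U.f = S.f ⋙ T.f) (hq : U.q = T.q ⋙ S.q)
    (hε : ∀ x : C, U.ε.app x =
      eqToHom (by rw [hf, hq]; rfl) ≫ T.f.map (S.ε.app (T.q.obj x)) ≫ T.ε.app x)
    (hS : S.IsTwisted) (hT : T.IsTwisted) : U.IsTwisted := by
  -- Reduce to the components of `S` and `T`.
  obtain ⟨Uf, Uq, Uε, Uqf, Uqε, Uεf⟩ := U
  dsimp only at hf hq hε
  subst hf
  subst hq
  -- `T.f` reflects equalities of morphisms
  have Tfaith : ∀ {a b : B} (m m' : a ⟶ b), T.f.map m = T.f.map m' → m = m' := by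
    intro a b m m' hmm
    have h1 := Functor.congr_hom T.qf m
    have h2 := Functor.congr_hom T.qf m'
    simp only [Functor.comp_map, Functor.id_map, hmm] at h1 h2
    rw [h1] at h2
    exact (cancel_mono (eqToHom _)).1 ((cancel_epi (eqToHom _)).1 h2)
  intro x y u hu
  simp only [Functor.comp_obj, Functor.comp_map] at hu ⊢
  set v : T.q.obj x ⟶ T.q.obj y := T.q.map u with hv_def
  have hvS : ¬ IsIdLike (S.q.map v) := hu
  have hvT : ¬ IsIdLike v := by
    rintro ⟨h, e⟩
    exact hvS ⟨congrArg S.q.obj h, by rw [e, eqToHom_map]⟩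
  obtain ⟨ut, ⟨hut1, hut2⟩, hutu⟩ := hT u hvT
  obtain ⟨vh, ⟨hvh1, hvh2⟩, hvhu⟩ := hS v hvS
  have hεx : Uε.app x = T.f.map (S.ε.app (T.q.obj x)) ≫ T.ε.app x := by
    rw [hε x]; simp
  have hεy : Uε.app y = T.f.map (S.ε.app (T.q.obj y)) ≫ T.ε.app y := by
    rw [hε y]; simp
  refine ⟨ut ≫ T.f.map vh, ⟨?_, ?_⟩, ?_⟩
  · rw [hεx, Category.assoc, reassoc_of% hut1, ← T.f.map_comp, hvh1]
    exact T.f.map_id _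
  · rw [hεy]
    have : u = ut ≫ T.f.map (vh ≫ S.f.map (S.q.map v) ≫ S.ε.app (T.q.obj y)) ≫ T.ε.app y := by
      rw [← hvh2]; exact hut2
    simpa using this
  · -- uniqueness
    intro w hw
    obtain ⟨hw1, hw2⟩ := hw
    rw [hεx] at hw1
    rw [hεy] at hw2
    have hqfb : T.q.obj (T.f.obj (S.f.obj (S.q.obj (T.q.obj x)))) = S.f.obj (S.q.obj (T.q.obj x)) :=
      Functor.congr_obj T.qf _
    set wq : T.q.obj x ⟶ S.f.obj (S.q.obj (T.q.obj x)) := T.q.map w ≫ eqToHom hqfb with hwq_def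
    -- naturality of T.ε
    have hnat : T.ε.app x ≫ w = T.f.map wq := by
      have hn := T.ε.naturality w
      simp only [Functor.comp_obj, Functor.comp_map, Functor.id_obj, Functor.id_map] at hn
      rw [T.ε_f (S.f.obj (S.q.obj (T.q.obj x)))] at hn
      rw [hwq_def, T.f.map_comp, eqToHom_map, ← hn]
    -- wq satisfies the first S-condition
    have hwq1 : S.ε.app (T.q.obj x) ≫ wq = 𝟙 (S.f.obj (S.q.obj (T.q.obj x))) := by
      apply Tfaith
      rw [T.f.map_comp, ← hnat, ← Category.assoc, hw1]
      simp
    -- wq satisfies the second S-condition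
    have hwq2 : v = wq ≫ S.f.map (S.q.map v) ≫ S.ε.app (T.q.obj y) := by
      have hc := congrArg T.q.map hw2
      simp only [T.q.map_comp, T.q_ε y] at hc
      have hc1 := Functor.congr_hom T.qf (S.f.map (S.q.map v))
      have hc2 := Functor.congr_hom T.qf (S.ε.app (T.q.obj y))
      simp only [Functor.comp_map, Functor.id_map] at hc1 hc2
      rw [hc1, hc2] at hc
      conv_lhs => rw [hv_def, hc]
      rw [hwq_def]
      simp only [Category.assoc, eqToHom_trans, eqToHom_trans_assoc, eqToHom_refl,
        Category.id_comp, Category.comp_id]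
    have hwqvh : wq = vh := hvhu wq ⟨hwq1, hwq2⟩
    -- key: w factors as h ≫ T.f.map vh with T.ε.app x ≫ h = 𝟙
    obtain ⟨h, hwh, hh1⟩ :
        ∃ h : x ⟶ T.f.obj (T.q.obj x),
          w = h ≫ T.f.map vh ∧ T.ε.app x ≫ h = 𝟙 (T.f.obj (T.q.obj x)) := by
      by_cases hid : IsIdLike (T.q.map w)
      · obtain ⟨p, hp⟩ := hid
        have hwqe : wq = eqToHom (p.trans hqfb) := by
          rw [hwq_def, hp, eqToHom_trans]
        refine ⟨w ≫ eqToHom (congrArg T.f.obj (p.trans hqfb).symm), ?_, ?_⟩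
        · rw [← hwqvh, hwqe]
          simp [eqToHom_map]
        · rw [← Category.assoc, hnat, hwqe]
          simp [eqToHom_map]
      · obtain ⟨h, ⟨hh1, hh2⟩, _⟩ := hT w hid
        refine ⟨h, ?_, hh1⟩
        rw [hh2]
        rw [T.ε_f (S.f.obj (S.q.obj (T.q.obj x)))]
        have hqw : T.q.map w = wq ≫ eqToHom hqfb.symm := by rw [hwq_def]; simp
        rw [hqw, hwqvh, T.f.map_comp, eqToHom_map]
        simp
    -- h satisfies the conditions determining ut
    have hfv : T.f.map v =
        T.f.map vh ≫ T.f.map (S.f.map (S.q.map v)) ≫ T.f.map (S.ε.app (T.q.obj y)) := by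
      conv_lhs => rw [hvh2]
      simp only [Functor.map_comp, Category.assoc]
    have hu2 : u = h ≫ T.f.map v ≫ T.ε.app y := by
      rw [hw2, hwh, hfv]
      simp only [Category.assoc]
    rw [hwh, hutu h ⟨hh1, hu2⟩]
end

section
/- Split coreflections are stable under pushout: given a split coreflection (f ⊣ q, ε) : A ⇸ B and a functor h : A ⟶ C, the pushout inclusion ϖ_C : C ⟶ B +_A C of f along h admits a split coreflection structure, with right adjoint [h q, 1_C] : B +_A C ⟶ C induced by the pushout universal property. -/
open CategoryTheory

namespace Stmt12Aux

variable {D : Type*} [Category D]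

lemma arrow_ext {X Y : Arrow D} (hl : X.left = Y.left) (hr : X.right = Y.right)
    (hh : X.hom = eqToHom hl ≫ Y.hom ≫ eqToHom hr.symm) : X = Y := by
  obtain ⟨xl, xr, xh⟩ := X
  obtain ⟨yl, yr, yh⟩ := Y
  change xl = yl at hl; change xr = yr at hr
  subst hl; subst hr
  simp at hh
  subst hh
  rfl

lemma arrow_hom_of_eq {X Y : Arrow D} (e : X = Y) :
    X.hom = eqToHom (congrArg Comma.left e) ≫ Y.hom ≫
      eqToHom (congrArg Comma.right e).symm := by
  subst e; simp

lemma arrow_eqToHom_left {X Y : Arrow D} (H : X = Y) :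
    (eqToHom H).left = eqToHom (congrArg Comma.left H) := by subst H; rfl

lemma arrow_eqToHom_right {X Y : Arrow D} (H : X = Y) :
    (eqToHom H).right = eqToHom (congrArg Comma.right H) := by subst H; rfl

lemma arrow_left_conj {X Y X' Y' : Arrow D} (H1 : X = X') (H2 : Y' = Y)
    {f : X'.left ⟶ Y'.left} {p : X.left = X'.left} {q : Y'.left = Y.left} :
    (eqToHom H1).left ≫ f ≫ (eqToHom H2).left = eqToHom p ≫ f ≫ eqToHom q := by
  subst H1; subst H2; simp

lemma arrow_right_conj {X Y X' Y' : Arrow D} (H1 : X = X') (H2 : Y' = Y)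
    {f : X'.right ⟶ Y'.right} {p : X.right = X'.right} {q : Y'.right = Y.right} :
    (eqToHom H1).right ≫ f ≫ (eqToHom H2).right = eqToHom p ≫ f ≫ eqToHom q := by
  subst H1; subst H2; simp

lemma eqToHom_four {a b c d e : D} (p : a = b) (q : b = c) (r : c = d) (s : d = e)
    (t : a = e) : eqToHom p ≫ (eqToHom q ≫ eqToHom r) ≫ eqToHom s = eqToHom t := by
  subst p q r s; simp

lemma eqToHom_conj_id {a b d e : D} (p : a = b) (q : b = d) (s : d = e)
    (t : a = e) : eqToHom p ≫ (𝟙 b ≫ eqToHom q) ≫ eqToHom s = eqToHom t := by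
  subst p q s; simp

/-- The functor sending `c` to the identity arrow on `c`. -/
@[simps]
def idArrow (D : Type*) [Category D] : D ⥤ Arrow D where
  obj c := Arrow.mk (𝟙 c)
  map g := Arrow.homMk (u := g) (v := g) (by simp)
  map_id _ := by ext <;> rfl
  map_comp _ _ := by ext <;> rfl

end Stmt12Aux

open Stmt12Aux

def toF {B : Type} [SmallCategory B] {P : Cat.{0,0}} (w : Cat.of B ⟶ P) : B ⥤ P :=
  w.toFunctor

def toF' {P : Cat.{0,0}} {C : Type} [SmallCategory C] (w : P ⟶ Cat.of C) : ↑P ⥤ C :=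
  w.toFunctor

/-- A functor between small categories as a morphism in `Cat`. -/
def catHom {A B : Type} [SmallCategory A] [SmallCategory B] (f : A ⥤ B) :
    Cat.of A ⟶ Cat.of B := f.toCatHom

set_option maxHeartbeats 800000 in
/-- Split coreflections are stable under pushout: the pushout coprojection
`ϖ_C : C ⟶ B +_A C` of a split coreflection `f` along `h` is a split coreflection
with right adjoint `[h q, 1_C]`. -/
theorem stmt12 {A B C : Type} [SmallCategory A] [SmallCategory B] [SmallCategory C]
    (S : SplitCoreflection A B) (h : A ⥤ C) (P : Cat.{0,0})
    (wB : Cat.of B ⟶ P) (wC : Cat.of C ⟶ P)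
    (hpo : IsPushout (catHom S.f) (catHom h) wB wC) :
    ∃ T : SplitCoreflection C P, T.f = wC.toFunctor ∧
      wB.toFunctor ⋙ T.q = S.q ⋙ h ∧ wC.toFunctor ⋙ T.q = 𝟭 C := by
  classical
  -- notation
  have sq : S.f ⋙ toF wB = h ⋙ toF wC := congrArg Cat.Hom.toFunctor hpo.w
  have oeq : ∀ b : B, (toF wC).obj (h.obj (S.q.obj b)) =
      (toF wB).obj (S.f.obj (S.q.obj b)) :=
    fun b => (Functor.congr_obj sq (S.q.obj b)).symm
  -- the functor B ⥤ Arrow P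
  let EB : B ⥤ Arrow ↑P :=
    { obj := fun b => Arrow.mk (eqToHom (oeq b) ≫ (toF wB).map (S.ε.app b))
      map := fun {b b'} g => Arrow.homMk
        (u := (toF wC).map (h.map (S.q.map g))) (v := (toF wB).map g) (by
          have nat : S.f.map (S.q.map g) ≫ S.ε.app b' = S.ε.app b ≫ g :=
            S.ε.naturality g
          have hg : (toF wB).map (S.f.map (S.q.map g)) =
              eqToHom (oeq b).symm ≫ (toF wC).map (h.map (S.q.map g)) ≫ eqToHom (oeq b') :=
            Functor.congr_hom sq (S.q.map g)
          dsimp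
          rw [← Category.assoc, show (toF wC).map (h.map (S.q.map g)) ≫ eqToHom (oeq b') =
            eqToHom (oeq b) ≫ (toF wB).map (S.f.map (S.q.map g)) from by rw [hg]; simp]
          rw [Category.assoc, ← (toF wB).map_comp, nat, (toF wB).map_comp, Category.assoc])
      map_id := fun b => by
        apply Arrow.hom_ext <;> dsimp <;> simp
      map_comp := fun g₁ g₂ => by
        apply Arrow.hom_ext <;> dsimp <;> simp }
  let EC : C ⥤ Arrow ↑P := toF wC ⋙ idArrow ↑P
  have hEcomm : catHom S.f ≫ (catHom EB) = catHom h ≫ (catHom EC) := by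
    apply Cat.ext
    show S.f ⋙ EB = h ⋙ EC
    have hobj : ∀ a, (S.f ⋙ EB).obj a = (h ⋙ EC).obj a := by
      intro a
      apply arrow_ext (hl := congrArg (fun x => (toF wC).obj (h.obj x)) (Functor.congr_obj S.qf a))
        (hr := Functor.congr_obj sq a)
      show eqToHom _ ≫ (toF wB).map (S.ε.app (S.f.obj a)) = _
      rw [S.ε_f a, eqToHom_map]
      show _ = eqToHom _ ≫ 𝟙 _ ≫ eqToHom _
      simp
      exact (eqToHom_trans _ _).symm
    refine CategoryTheory.Functor.ext hobj fun a a' g => ?_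
    have hqf : S.q.map (S.f.map g) = eqToHom (Functor.congr_obj S.qf a) ≫ g ≫
        eqToHom (Functor.congr_obj S.qf a').symm := Functor.congr_hom S.qf g
    have hsq : (toF wB).map (S.f.map g) = eqToHom (Functor.congr_obj sq a) ≫ (toF wC).map (h.map g) ≫
        eqToHom (Functor.congr_obj sq a').symm := Functor.congr_hom sq g
    apply Arrow.hom_ext
    · simp only [Functor.comp_map, Arrow.comp_left, arrow_eqToHom_left, EB, EC, idArrow,
        Arrow.homMk_left, hqf]
      simp [eqToHom_map]
      erw [arrow_eqToHom_left, arrow_eqToHom_left]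
    · simp only [Functor.comp_map, Arrow.comp_right, arrow_eqToHom_right, EB, EC, idArrow,
        Arrow.homMk_right, hsq]
      exact (arrow_right_conj (hobj a) (hobj a').symm).symm
  -- the retraction r = [h q, 1_C]
  have hrcomm : catHom S.f ≫ catHom (S.q ⋙ h) = catHom h ≫ catHom (𝟭 C) := by
    apply Cat.ext
    show S.f ⋙ (S.q ⋙ h) = h ⋙ 𝟭 C
    rw [Functor.comp_id, ← Functor.assoc, S.qf, Functor.id_comp]
  let r : P ⟶ Cat.of C := hpo.desc (catHom (S.q ⋙ h)) (catHom (𝟭 C)) hrcomm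
  have hrB : wB ≫ r = catHom (S.q ⋙ h) := hpo.inl_desc _ _ _
  have hrC : wC ≫ r = catHom (𝟭 C) := hpo.inr_desc _ _ _
  have hrB' : toF wB ⋙ toF' r = S.q ⋙ h := congrArg Cat.Hom.toFunctor hrB
  have hrC' : toF wC ⋙ toF' r = 𝟭 C := congrArg Cat.Hom.toFunctor hrC
  -- the functor E : P ⥤ Arrow P
  let E : P ⟶ Cat.of (Arrow ↑P) := hpo.desc (catHom EB) (catHom EC) hEcomm
  have hEBc : wB ≫ E = catHom EB := hpo.inl_desc _ _ _
  have hECc : wC ≫ E = catHom EC := hpo.inr_desc _ _ _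
  have h1 : E ≫ catHom (Arrow.leftFunc) = r ≫ catHom (toF wC) := by
    apply hpo.hom_ext
    · rw [← Category.assoc, ← Category.assoc, hEBc, hrB]
      apply Cat.ext; show EB ⋙ Arrow.leftFunc = (S.q ⋙ h) ⋙ toF wC
      rfl
    · rw [← Category.assoc, ← Category.assoc, hECc, hrC]
      apply Cat.ext; show EC ⋙ Arrow.leftFunc = 𝟭 C ⋙ toF wC
      rfl
  have h2 : E ≫ catHom (Arrow.rightFunc) = catHom (𝟭 ↑P) := by
    apply hpo.hom_ext
    · rw [← Category.assoc, hEBc]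
      apply Cat.ext; show EB ⋙ Arrow.rightFunc = toF wB
      rfl
    · rw [← Category.assoc, hECc]
      apply Cat.ext; show EC ⋙ Arrow.rightFunc = toF wC
      rfl
  have h1' : toF' E ⋙ Arrow.leftFunc = toF' r ⋙ toF wC := congrArg Cat.Hom.toFunctor h1
  have h2' : toF' E ⋙ Arrow.rightFunc = 𝟭 ↑P := congrArg Cat.Hom.toFunctor h2
  have e1 : ∀ p : ↑P, ((toF' E).obj p).left = (toF wC).obj ((toF' r).obj p) :=
    fun p => Functor.congr_obj h1' p
  have e2 : ∀ p : ↑P, ((toF' E).obj p).right = p :=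
    fun p => Functor.congr_obj h2' p
  -- the counit
  let ε' : (toF' r ⋙ toF wC) ⟶ 𝟭 ↑P :=
    { app := fun p => eqToHom (e1 p).symm ≫ ((toF' E).obj p).hom ≫ eqToHom (e2 p)
      naturality := by
        intro p p' g
        have hl : ((toF' E).map g).left =
            eqToHom (e1 p) ≫ (toF wC).map ((toF' r).map g) ≫ eqToHom (e1 p').symm :=
          Functor.congr_hom h1' g
        have hr2 : ((toF' E).map g).right = eqToHom (e2 p) ≫ g ≫ eqToHom (e2 p').symm :=
          Functor.congr_hom h2' g
        have hw : ((toF' E).map g).left ≫ ((toF' E).obj p').hom =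
            ((toF' E).obj p).hom ≫ ((toF' E).map g).right := Arrow.w _
        show (toF wC).map ((toF' r).map g) ≫
            eqToHom (e1 p').symm ≫ ((toF' E).obj p').hom ≫ eqToHom (e2 p') =
            (eqToHom (e1 p).symm ≫ ((toF' E).obj p).hom ≫ eqToHom (e2 p)) ≫ g
        rw [← Category.assoc, show (toF wC).map ((toF' r).map g) ≫
            eqToHom (e1 p').symm = eqToHom (e1 p).symm ≫ ((toF' E).map g).left from by
            rw [hl]; simp, Category.assoc]
        slice_lhs 2 3 => rw [hw]
        rw [hr2]
        simp }
  -- r.map of the hom-part of E is trivial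
  have hJK : E ≫ catHom (Functor.mapArrow (toF' r)) = r ≫ catHom (idArrow C) := by
    apply hpo.hom_ext
    · rw [← Category.assoc, ← Category.assoc, hEBc, hrB]
      apply Cat.ext; show EB ⋙ Functor.mapArrow (toF' r) = (S.q ⋙ h) ⋙ idArrow C
      have hobj : ∀ b, (EB ⋙ Functor.mapArrow (toF' r)).obj b =
          ((S.q ⋙ h) ⋙ idArrow C).obj b := by
        intro b
        apply arrow_ext (hl := Functor.congr_obj hrC' (h.obj (S.q.obj b)))
          (hr := Functor.congr_obj hrB' b)
        show (toF' r).map (eqToHom (oeq b) ≫ (toF wB).map (S.ε.app b)) = _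
        have hh : (toF' r).map ((toF wB).map (S.ε.app b)) =
            eqToHom (Functor.congr_obj hrB' (S.f.obj (S.q.obj b))) ≫ h.map (S.q.map (S.ε.app b)) ≫
              eqToHom (Functor.congr_obj hrB' b).symm := Functor.congr_hom hrB' (S.ε.app b)
        rw [Functor.map_comp, eqToHom_map, hh, S.q_ε, eqToHom_map]
        show _ = eqToHom _ ≫ 𝟙 _ ≫ eqToHom _
        simp
        exact (eqToHom_trans _ _).symm
      refine CategoryTheory.Functor.ext hobj fun b b' g => ?_
      have h1m : (toF' r).map ((toF wC).map (h.map (S.q.map g))) =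
          eqToHom (Functor.congr_obj hrC' (h.obj (S.q.obj b))) ≫ h.map (S.q.map g) ≫
            eqToHom (Functor.congr_obj hrC' (h.obj (S.q.obj b'))).symm :=
        Functor.congr_hom hrC' (h.map (S.q.map g))
      have h2m : (toF' r).map ((toF wB).map g) =
          eqToHom (Functor.congr_obj hrB' b) ≫ h.map (S.q.map g) ≫
            eqToHom (Functor.congr_obj hrB' b').symm :=
        Functor.congr_hom hrB' g
      apply Arrow.hom_ext
      · simp only [Functor.comp_map, Functor.mapArrow, Arrow.comp_left, arrow_eqToHom_left,
          EB, idArrow, Arrow.homMk_left, h1m]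
        erw [arrow_eqToHom_left, arrow_eqToHom_left]
      · simp only [Functor.comp_map, Functor.mapArrow, Arrow.comp_right, arrow_eqToHom_right,
          EB, idArrow, Arrow.homMk_right, h2m]
        exact (arrow_right_conj (hobj b) (hobj b').symm).symm
    · rw [← Category.assoc, ← Category.assoc, hECc, hrC]
      apply Cat.ext; show EC ⋙ Functor.mapArrow (toF' r) = 𝟭 C ⋙ idArrow C
      have hobj : ∀ c, (EC ⋙ Functor.mapArrow (toF' r)).obj c =
          (𝟭 C ⋙ idArrow C).obj c := by
        intro c
        apply arrow_ext (hl := Functor.congr_obj hrC' c) (hr := Functor.congr_obj hrC' c)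
        show (toF' r).map (𝟙 ((toF wC).obj c)) = eqToHom _ ≫ 𝟙 c ≫ eqToHom _
        simp
        exact (eqToHom_refl _ _).symm.trans (eqToHom_trans _ _).symm
      refine CategoryTheory.Functor.ext hobj fun c c' g => ?_
      have h3m : (toF' r).map ((toF wC).map g) =
          eqToHom (Functor.congr_obj hrC' c) ≫ g ≫ eqToHom (Functor.congr_obj hrC' c').symm :=
        Functor.congr_hom hrC' g
      apply Arrow.hom_ext
      · simp only [Functor.comp_map, Functor.mapArrow, Arrow.comp_left, arrow_eqToHom_left,
          EC, idArrow, Arrow.homMk_left, h3m]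
        exact (arrow_left_conj (hobj c) (hobj c').symm).symm
      · simp only [Functor.comp_map, Functor.mapArrow, Arrow.comp_right, arrow_eqToHom_right,
          EC, idArrow, Arrow.homMk_right, h3m]
        exact (arrow_right_conj (hobj c) (hobj c').symm).symm
  have hJK' : toF' E ⋙ Functor.mapArrow (toF' r) =
      toF' r ⋙ idArrow C := congrArg Cat.Hom.toFunctor hJK
  have rhom : ∀ p : ↑P, (toF' r).map (((toF' E).obj p).hom) =
      eqToHom ((congrArg Comma.left (Functor.congr_obj hJK' p)) :
          (toF' r).obj (((toF' E).obj p).left) = (toF' r).obj p) ≫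
        𝟙 _ ≫ eqToHom ((congrArg Comma.right (Functor.congr_obj hJK' p)).symm :
          (toF' r).obj p = (toF' r).obj (((toF' E).obj p).right)) :=
    fun p => arrow_hom_of_eq (Functor.congr_obj hJK' p)
  -- assemble the split coreflection
  refine ⟨{ f := toF wC, q := toF' r, ε := ε', qf := hrC', q_ε := ?_, ε_f := ?_ }, rfl, hrB', hrC'⟩
  · intro x
    show (toF' r).map (eqToHom (e1 x).symm ≫ ((toF' E).obj x).hom ≫
      eqToHom (e2 x)) = _
    rw [Functor.map_comp, Functor.map_comp, eqToHom_map, eqToHom_map, rhom x]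
    simp
    exact eqToHom_four _ _ _ _ _
  · intro c
    have eobj : (toF' E).obj ((toF wC).obj c) = EC.obj c :=
      Functor.congr_obj (show toF wC ⋙ toF' E = EC from congrArg Cat.Hom.toFunctor hECc) c
    show eqToHom (e1 _).symm ≫ ((toF' E).obj ((toF wC).obj c)).hom ≫
      eqToHom (e2 _) = _
    rw [arrow_hom_of_eq eobj]
    show _ ≫ (_ ≫ 𝟙 _ ≫ _) ≫ _ = _
    simp
    exact eqToHom_conj_id (D := ↑P) _ _ _ _
end

section
/- Every functor f : A₀ ⟶ B from a discrete category factorises as a split coreflection followed by a discrete opfibration, via the coproduct of coslice categories: the functor If : A₀ ⟶ Σ_{a ∈ A₀} (f a / B) sending a to (a, 1_{f a}) is a split coreflection left adjoint with right adjoint Sf sending (a, u) to a, and the functor Tf sending (a, u : f a ⟶ b) to b is a discrete opfibration, with Tf ∘ If = f. -/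
open CategoryTheory

/-! The coslice `f a / B` has the initial object `1_{f a}`, and including a chosen initial object
into every summand of a coproduct of categories is a split coreflection onto the discrete category
of indices, the counit at `(a, c)` being the unique map out of the initial object. The codomain
functor `f a / B ⥤ B` is a discrete opfibration (the lift of `u` at `v` is `v ⟶ v ≫ u`), and
a coproduct of discrete opfibrations over a common base is again one. -/

open Limits

theorem CategoryTheory.Under.isDiscreteOpfibration_forget {C : Type*} [Category C] (X : C) :
    IsDiscreteOpfibration (Under.forget X) := by
  intro x b u
  refine ⟨⟨Under.mk (x.hom ≫ u), Under.homMk u rfl⟩, ⟨rfl, (Category.comp_id u).symm⟩, ?_⟩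
  rintro ⟨⟨⟨⟨⟩⟩, b', h'⟩, k⟩ ⟨hb, hk⟩
  obtain rfl : b' = b := hb
  replace hk : k.right = u := hk.trans (Category.comp_id u)
  obtain rfl : x.hom ≫ u = h' := hk ▸ Under.w k
  obtain rfl : k = Under.homMk u := Under.UnderMorphism.ext hk
  rfl

theorem IsDiscreteOpfibration.sigmaDesc {I : Type*} {C : I → Type*} [∀ i, Category (C i)]
    {B : Type*} [Category B] {F : ∀ i, C i ⥤ B} (hF : ∀ i, IsDiscreteOpfibration (F i)) :
    IsDiscreteOpfibration (Sigma.desc F) := by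
  rintro ⟨i, c⟩ b u
  obtain ⟨⟨c', k⟩, hk, huniq⟩ := hF i c b u
  refine ⟨⟨⟨i, c'⟩, Sigma.SigmaHom.mk k⟩, hk, ?_⟩
  rintro ⟨⟨_, _⟩, m⟩ hm
  cases m using Sigma.SigmaHom.casesOn with | mk m => ?_
  exact congrArg (fun p : Σ c' : C i, c ⟶ c' => (⟨⟨i, p.1⟩, Sigma.SigmaHom.mk p.2⟩ :
    Σ x' : Σ i, C i, (⟨i, c⟩ : Σ i, C i) ⟶ x')) (huniq ⟨_, m⟩ hm)

noncomputable def SplitCoreflection.sigmaOfIsInitial {I : Type*} {C : I → Type*}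
    [∀ i, Category (C i)] (z : ∀ i, C i) (hz : ∀ i, IsInitial (z i)) :
    SplitCoreflection (Discrete I) (Σ i, C i) where
  f := Discrete.functor fun i => ⟨i, z i⟩
  q := Sigma.desc fun i => (Functor.const (C i)).obj ⟨i⟩
  ε :=
    { app := fun x => Sigma.SigmaHom.mk ((hz x.1).to x.2)
      naturality := by
        rintro ⟨i, c⟩ _ m
        cases m using Sigma.SigmaHom.casesOn with | mk m => ?_
        exact congrArg Sigma.SigmaHom.mk ((hz i).hom_ext _ _) }
  qf := Discrete.functor_ext fun _ => rfl
  q_ε _ := Subsingleton.elim _ _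
  ε_f i := congrArg Sigma.SigmaHom.mk ((hz i.as).hom_ext _ _)

/-- Every functor from a discrete category factorises as a split coreflection
followed by a discrete opfibration, via the coproduct of coslice categories. -/
theorem stmt15 {I : Type} {B : Type} [SmallCategory B] (f : Discrete I ⥤ B) :
    ∃ (S : SplitCoreflection (Discrete I) (Σ a : I, Under (f.obj ⟨a⟩)))
      (Tf : (Σ a : I, Under (f.obj ⟨a⟩)) ⥤ B),
      (∀ a : I, S.f.obj ⟨a⟩ = ⟨a, Under.mk (𝟙 (f.obj ⟨a⟩))⟩) ∧
      (∀ e : Σ a : I, Under (f.obj ⟨a⟩), S.q.obj e = ⟨e.1⟩) ∧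
      (∀ e : Σ a : I, Under (f.obj ⟨a⟩), Tf.obj e = e.2.right) ∧
      IsDiscreteOpfibration Tf ∧
      S.f ⋙ Tf = f :=
  ⟨.sigmaOfIsInitial _ fun _ => Under.mkIdInitial, Sigma.desc fun _ => Under.forget _,
    fun _ => rfl, fun _ => rfl, fun _ => rfl,
    .sigmaDesc fun _ => Under.isDiscreteOpfibration_forget _, Discrete.functor_ext fun _ => rfl⟩
end

section
/- Given a commutative square k ∘ f = g ∘ h of functors where f : A ⟶ B underlies a twisted coreflection (f ⊣ q, ε) and g : C ⟶ D underlies a delta lens (g, ψ), there exists a functor j : B ⟶ C with j ∘ f = h and g ∘ j = k. -/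
open CategoryTheory

/-!
For `x : B`, lift `k ε_x : g (h (q x)) ⟶ k x` along the lens at `h (q x)`: this gives the
object `j x` and a morphism `π_x : h (q x) ⟶ j x`. If `q u` is an identity, `j u` is the lens
lift of `k u` at `j x`. Otherwise `u = û ≫ f (q u) ≫ ε_y` with `ε_x ≫ û = 1`, so the lift of
`k û` at `j x` is a retraction of `π_x` (it lifts `k (ε_x ≫ û) = 1`), and `j u` is this
retraction followed by `h (q u) ≫ π_y`. The second formula remains valid for any such
factorization of `u`, even when `q u` is an identity; with the naturality
`π_x ≫ j u = h (q u) ≫ π_y` this reduces functoriality to the lens axioms. Since lifts lie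
over what they lift and `ε` is trivial on the image of `f`, `g ∘ j = k` and `j ∘ f = h`.
-/

namespace DeltaLens

variable {C D : Type*} [Category C] [Category D] {g : C ⥤ D} (L : DeltaLens g)

theorem tgt_eq_of_eq_eqToHom {a : C} {b : D} {u : g.obj a ⟶ b} {hb : g.obj a = b}
    (hu : u = eqToHom hb) : L.tgt a u = a := by
  subst hb hu; exact L.tgt_id a

theorem lift_eq_of_eq_eqToHom {a : C} {b : D} {u : g.obj a ⟶ b} {hb : g.obj a = b}
    (hu : u = eqToHom hb) : L.lift a u = eqToHom (L.tgt_eq_of_eq_eqToHom hu).symm := by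
  subst hb hu; exact L.lift_id a

theorem lift_eq_of_eq {a : C} {b : D} {u u' : g.obj a ⟶ b} (hu : u = u') :
    L.lift a u = L.lift a u' ≫ eqToHom (congrArg (L.tgt a) hu).symm := by
  subst hu; simp

theorem tgt_congr {a a' : C} {b : D} (ha : a = a') {u : g.obj a ⟶ b} {u' : g.obj a' ⟶ b}
    (hu : u = eqToHom (congrArg g.obj ha) ≫ u') : L.tgt a u = L.tgt a' u' := by
  subst ha hu; simp

theorem lift_congr {a a' : C} {b : D} (ha : a = a') {u : g.obj a ⟶ b} {u' : g.obj a' ⟶ b}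
    (hu : u = eqToHom (congrArg g.obj ha) ≫ u') :
    L.lift a u = eqToHom ha ≫ L.lift a' u' ≫ eqToHom (L.tgt_congr ha hu).symm := by
  subst ha hu; simp

theorem tgt_comp_eqToHom (a : C) {b b' : D} (u : g.obj a ⟶ b) (hb : b = b') :
    L.tgt a (u ≫ eqToHom hb) = L.tgt a u := by
  subst hb; simp

theorem lift_comp_eqToHom (a : C) {b b' : D} (u : g.obj a ⟶ b) (hb : b = b') :
    L.lift a (u ≫ eqToHom hb) = L.lift a u ≫ eqToHom (L.tgt_comp_eqToHom a u hb).symm := by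
  subst hb; simp

theorem lift_comp_lift_tgt (a : C) {b d : D} (u : g.obj a ⟶ b) (v : b ⟶ d) :
    L.lift a u ≫ L.lift (L.tgt a u) (eqToHom (L.tgt_obj a u) ≫ v)
      = L.lift a (u ≫ v) ≫ eqToHom (L.tgt_comp a u v) := by
  simp [L.lift_comp a u v]

end DeltaLens

namespace SplitCoreflection

variable {A B : Type*} [Category A] [Category B] {S : SplitCoreflection A B}

theorem comp_eq_of_factor {x y z : B} {u : x ⟶ y} (v : y ⟶ z) {w : x ⟶ S.f.obj (S.q.obj x)}
    (hu : u = w ≫ S.f.map (S.q.map u) ≫ S.ε.app y) :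
    u ≫ v = w ≫ S.f.map (S.q.map (u ≫ v)) ≫ S.ε.app z := by
  have hnat := S.ε.naturality v
  dsimp only [Functor.comp_map, Functor.id_map] at hnat
  conv_lhs => rw [hu]
  simp only [Category.assoc, ← hnat, S.q.map_comp, S.f.map_comp]

theorem counit_comp_section_of_isIdLike {x y : B} {u : x ⟶ y} (hq : S.q.obj x = S.q.obj y)
    (hu : S.q.map u = eqToHom hq) {w : y ⟶ S.f.obj (S.q.obj y)}
    (hw : S.ε.app y ≫ w = 𝟙 _) :
    S.ε.app x ≫ u ≫ w ≫ eqToHom (congrArg S.f.obj hq.symm) = 𝟙 _ := by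
  have hnat := S.ε.naturality u
  dsimp only [Functor.comp_map, Functor.id_map] at hnat
  rw [← Category.assoc, ← hnat]
  simp [hu, eqToHom_map, reassoc_of% hw]

theorem comp_eq_factor_of_isIdLike {x y z : B} {u : x ⟶ y} (hq : S.q.obj x = S.q.obj y)
    (hu : S.q.map u = eqToHom hq) {v : y ⟶ z} {w : y ⟶ S.f.obj (S.q.obj y)}
    (hv : v = w ≫ S.f.map (S.q.map v) ≫ S.ε.app z) :
    u ≫ v = (u ≫ w ≫ eqToHom (congrArg S.f.obj hq.symm))
      ≫ S.f.map (S.q.map (u ≫ v)) ≫ S.ε.app z := by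
  conv_lhs => rw [hv]
  simp [hu, eqToHom_map]

theorem counit_app_f_comp_eqToHom (a : A) :
    S.ε.app (S.f.obj a) ≫ eqToHom (congrArg S.f.obj (Functor.congr_obj S.qf a).symm)
      = 𝟙 _ := by
  simp [S.ε_f]

theorem map_f_eq_factor {a a' : A} (m : a ⟶ a') :
    S.f.map m = eqToHom (congrArg S.f.obj (Functor.congr_obj S.qf a).symm)
      ≫ S.f.map (S.q.map (S.f.map m)) ≫ S.ε.app (S.f.obj a') := by
  have hqf := Functor.congr_hom S.qf m
  dsimp only [Functor.comp_map, Functor.id_map] at hqf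
  simp [hqf, S.ε_f, eqToHom_map]

variable {C D : Type*} [Category C] [Category D] {g : C ⥤ D} {h : A ⥤ C} {k : B ⥤ D}
  (hsq : S.f ⋙ k = h ⋙ g)

def counitImage (x : B) : g.obj (h.obj (S.q.obj x)) ⟶ k.obj x :=
  eqToHom (Functor.congr_obj hsq (S.q.obj x)).symm ≫ k.map (S.ε.app x)

theorem counitImage_comp_map {x y : B} (u : x ⟶ y) :
    counitImage hsq x ≫ k.map u = g.map (h.map (S.q.map u)) ≫ counitImage hsq y := by
  have hnat := S.ε.naturality u
  dsimp only [Functor.comp_map, Functor.id_map] at hnat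
  have hk := Functor.congr_hom hsq (S.q.map u)
  dsimp only [Functor.comp_map] at hk
  simp [counitImage, ← k.map_comp, ← hnat, hk]

theorem counitImage_comp_section {x : B} {w : x ⟶ S.f.obj (S.q.obj x)}
    (hw : S.ε.app x ≫ w = 𝟙 _) :
    counitImage hsq x ≫ k.map w = eqToHom (Functor.congr_obj hsq (S.q.obj x)).symm := by
  simp [counitImage, ← k.map_comp, hw]

theorem counitImage_f (a : A) :
    counitImage hsq (S.f.obj a) = eqToHom ((Functor.congr_obj hsq (S.q.obj (S.f.obj a))).symm.trans
      (congrArg (fun a => k.obj (S.f.obj a)) (Functor.congr_obj S.qf a))) := by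
  simp [counitImage, S.ε_f, eqToHom_map]

end SplitCoreflection

namespace DeltaLens

open SplitCoreflection

variable {A B C D : Type*} [Category A] [Category B] [Category C] [Category D]
  {S : SplitCoreflection A B} {g : C ⥤ D} (L : DeltaLens g) {h : A ⥤ C} {k : B ⥤ D}
  (hsq : S.f ⋙ k = h ⋙ g)

abbrev fillerObj (x : B) : C :=
  L.tgt (h.obj (S.q.obj x)) (counitImage hsq x)

def counitLift (x : B) : h.obj (S.q.obj x) ⟶ L.fillerObj hsq x :=
  L.lift _ (counitImage hsq x)

theorem obj_fillerObj (x : B) : g.obj (L.fillerObj hsq x) = k.obj x :=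
  L.tgt_obj _ _

theorem tgt_fillerObj_of_section {x : B} {w : x ⟶ S.f.obj (S.q.obj x)}
    (hw : S.ε.app x ≫ w = 𝟙 _) :
    L.tgt (L.fillerObj hsq x) (eqToHom (L.obj_fillerObj hsq x) ≫ k.map w) = h.obj (S.q.obj x) :=
  (L.tgt_comp _ _ _).symm.trans (L.tgt_eq_of_eq_eqToHom (counitImage_comp_section hsq hw))

def fillerRetraction {x : B} {w : x ⟶ S.f.obj (S.q.obj x)} (hw : S.ε.app x ≫ w = 𝟙 _) :
    L.fillerObj hsq x ⟶ h.obj (S.q.obj x) :=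
  L.lift _ (eqToHom (L.obj_fillerObj hsq x) ≫ k.map w)
    ≫ eqToHom (L.tgt_fillerObj_of_section hsq hw)

theorem counitLift_comp_fillerRetraction {x : B} {w : x ⟶ S.f.obj (S.q.obj x)}
    (hw : S.ε.app x ≫ w = 𝟙 _) :
    L.counitLift hsq x ≫ L.fillerRetraction hsq hw = 𝟙 _ := by
  rw [fillerRetraction, ← Category.assoc, counitLift, L.lift_comp_lift_tgt,
    L.lift_eq_of_eq_eqToHom (counitImage_comp_section hsq hw)]
  simp

theorem tgt_fillerObj_of_isIdLike {x y : B} {u : x ⟶ y} (hq : S.q.obj x = S.q.obj y)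
    (hu : S.q.map u = eqToHom hq) :
    L.tgt (L.fillerObj hsq x) (eqToHom (L.obj_fillerObj hsq x) ≫ k.map u) = L.fillerObj hsq y :=
  (L.tgt_comp _ _ _).symm.trans <| L.tgt_congr (congrArg h.obj hq) <| by
    rw [counitImage_comp_map, hu]; simp [eqToHom_map]

theorem counitLift_comp_lift_of_isIdLike {x y : B} {u : x ⟶ y} (hq : S.q.obj x = S.q.obj y)
    (hu : S.q.map u = eqToHom hq) :
    L.counitLift hsq x ≫ L.lift _ (eqToHom (L.obj_fillerObj hsq x) ≫ k.map u)
      ≫ eqToHom (L.tgt_fillerObj_of_isIdLike hsq hq hu)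
      = eqToHom (congrArg h.obj hq) ≫ L.counitLift hsq y := by
  rw [← Category.assoc, counitLift, L.lift_comp_lift_tgt,
    L.lift_congr (congrArg h.obj hq) (u' := counitImage hsq y)
      (by rw [counitImage_comp_map, hu]; simp [eqToHom_map])]
  simp [counitLift]

theorem tgt_comp_of_isIdLike {x y : B} {u : x ⟶ y} (hq : S.q.obj x = S.q.obj y)
    (hu : S.q.map u = eqToHom hq) {d : D} (v : k.obj y ⟶ d) :
    L.tgt (L.fillerObj hsq x) (eqToHom (L.obj_fillerObj hsq x) ≫ k.map u ≫ v)
      = L.tgt (L.fillerObj hsq y) (eqToHom (L.obj_fillerObj hsq y) ≫ v) := by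
  rw [← Category.assoc]
  exact (L.tgt_comp _ _ v).trans (L.tgt_congr (L.tgt_fillerObj_of_isIdLike hsq hq hu) (by simp))

theorem lift_comp_of_isIdLike {x y : B} {u : x ⟶ y} (hq : S.q.obj x = S.q.obj y)
    (hu : S.q.map u = eqToHom hq) {d : D} (v : k.obj y ⟶ d) :
    L.lift (L.fillerObj hsq x) (eqToHom (L.obj_fillerObj hsq x) ≫ k.map u ≫ v)
      = L.lift _ (eqToHom (L.obj_fillerObj hsq x) ≫ k.map u)
        ≫ eqToHom (L.tgt_fillerObj_of_isIdLike hsq hq hu)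
        ≫ L.lift (L.fillerObj hsq y) (eqToHom (L.obj_fillerObj hsq y) ≫ v)
        ≫ eqToHom (L.tgt_comp_of_isIdLike hsq hq hu v).symm := by
  rw [L.lift_eq_of_eq (Category.assoc _ _ _).symm, L.lift_comp,
    L.lift_congr (L.tgt_fillerObj_of_isIdLike hsq hq hu)
      (u' := eqToHom (L.obj_fillerObj hsq y) ≫ v) (by simp)]
  simp

theorem lift_eq_fillerRetraction_of_isIdLike {x y : B} {u : x ⟶ y} (hq : S.q.obj x = S.q.obj y)
    (hu : S.q.map u = eqToHom hq) {w : x ⟶ S.f.obj (S.q.obj x)} (hw : S.ε.app x ≫ w = 𝟙 _)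
    (hfac : u = w ≫ S.f.map (S.q.map u) ≫ S.ε.app y) :
    L.lift _ (eqToHom (L.obj_fillerObj hsq x) ≫ k.map u)
      ≫ eqToHom (L.tgt_fillerObj_of_isIdLike hsq hq hu)
      = L.fillerRetraction hsq hw ≫ h.map (S.q.map u) ≫ L.counitLift hsq y := by
  have harg : eqToHom (L.obj_fillerObj hsq x) ≫ k.map u
      = (eqToHom (L.obj_fillerObj hsq x) ≫ k.map w)
        ≫ eqToHom (congrArg (fun a => k.obj (S.f.obj a)) hq) ≫ k.map (S.ε.app y) := by
    conv_lhs => rw [hfac]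
    simp [hu, eqToHom_map]
  rw [L.lift_eq_of_eq harg, L.lift_comp,
    L.lift_congr ((L.tgt_fillerObj_of_section hsq hw).trans (congrArg h.obj hq))
      (u' := counitImage hsq y) (by simp [counitImage])]
  simp [fillerRetraction, counitLift, hu, eqToHom_map]

variable (hS : S.IsTwisted)

open Classical in
noncomputable def fillerMap {x y : B} (u : x ⟶ y) : L.fillerObj hsq x ⟶ L.fillerObj hsq y :=
  if hu : IsIdLike (S.q.map u) then
    L.lift _ (eqToHom (L.obj_fillerObj hsq x) ≫ k.map u)
      ≫ eqToHom (L.tgt_fillerObj_of_isIdLike hsq hu.choose hu.choose_spec)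
  else
    L.fillerRetraction hsq (hS u hu).exists.choose_spec.1 ≫ h.map (S.q.map u)
      ≫ L.counitLift hsq y

theorem fillerMap_of_isIdLike {x y : B} {u : x ⟶ y} (hq : S.q.obj x = S.q.obj y)
    (hu : S.q.map u = eqToHom hq) :
    L.fillerMap hsq hS u = L.lift _ (eqToHom (L.obj_fillerObj hsq x) ≫ k.map u)
      ≫ eqToHom (L.tgt_fillerObj_of_isIdLike hsq hq hu) := by
  unfold fillerMap; rw [dif_pos ⟨hq, hu⟩]

theorem fillerMap_eq_of_factor {x y : B} {u : x ⟶ y} {w : x ⟶ S.f.obj (S.q.obj x)}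
    (hw : S.ε.app x ≫ w = 𝟙 _) (hfac : u = w ≫ S.f.map (S.q.map u) ≫ S.ε.app y) :
    L.fillerMap hsq hS u
      = L.fillerRetraction hsq hw ≫ h.map (S.q.map u) ≫ L.counitLift hsq y := by
  by_cases hu : IsIdLike (S.q.map u)
  · obtain ⟨hq, he⟩ := hu
    rw [L.fillerMap_of_isIdLike hsq hS hq he]
    exact L.lift_eq_fillerRetraction_of_isIdLike hsq hq he hw hfac
  · obtain rfl : w = (hS u hu).exists.choose :=
      (hS u hu).unique ⟨hw, hfac⟩ (hS u hu).exists.choose_spec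
    unfold fillerMap; rw [dif_neg hu]

theorem counitLift_comp_fillerMap {x y : B} (u : x ⟶ y) :
    L.counitLift hsq x ≫ L.fillerMap hsq hS u = h.map (S.q.map u) ≫ L.counitLift hsq y := by
  by_cases hu : IsIdLike (S.q.map u)
  · obtain ⟨hq, he⟩ := hu
    rw [L.fillerMap_of_isIdLike hsq hS hq he, L.counitLift_comp_lift_of_isIdLike hsq hq he, he,
      eqToHom_map]
  · obtain ⟨w, hw, hfac⟩ := (hS u hu).exists
    rw [L.fillerMap_eq_of_factor hsq hS hw hfac,
      reassoc_of% L.counitLift_comp_fillerRetraction hsq hw]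

theorem fillerMap_id (x : B) : L.fillerMap hsq hS (𝟙 x) = 𝟙 _ := by
  rw [L.fillerMap_of_isIdLike hsq hS rfl (by simp),
    L.lift_eq_of_eq_eqToHom (hb := L.obj_fillerObj hsq x) (by simp)]
  simp

theorem fillerMap_comp_of_isIdLike {x y z : B} {u : x ⟶ y} (hq : S.q.obj x = S.q.obj y)
    (hu : S.q.map u = eqToHom hq) (v : y ⟶ z) :
    L.fillerMap hsq hS (u ≫ v) = L.fillerMap hsq hS u ≫ L.fillerMap hsq hS v := by
  by_cases hv : IsIdLike (S.q.map v)
  · obtain ⟨hq', hv'⟩ := hv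
    rw [L.fillerMap_of_isIdLike hsq hS (hq.trans hq') (by simp [hu, hv']),
      L.fillerMap_of_isIdLike hsq hS hq hu, L.fillerMap_of_isIdLike hsq hS hq' hv',
      L.lift_eq_of_eq (congrArg _ (k.map_comp u v)), L.lift_comp_of_isIdLike hsq hq hu]
    simp
  · obtain ⟨w, hw, hfac⟩ := (hS v hv).exists
    have harg : eqToHom (L.obj_fillerObj hsq x)
          ≫ k.map (u ≫ w ≫ eqToHom (congrArg S.f.obj hq.symm))
        = eqToHom (L.obj_fillerObj hsq x) ≫ k.map u
          ≫ (k.map w ≫ eqToHom (congrArg (fun a => k.obj (S.f.obj a)) hq.symm)) := by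
      simp [eqToHom_map]
    rw [L.fillerMap_eq_of_factor hsq hS (counit_comp_section_of_isIdLike hq hu hw)
        (comp_eq_factor_of_isIdLike hq hu hfac),
      L.fillerMap_eq_of_factor hsq hS hw hfac, L.fillerMap_of_isIdLike hsq hS hq hu,
      fillerRetraction, L.lift_eq_of_eq harg, L.lift_comp_of_isIdLike hsq hq hu,
      L.lift_eq_of_eq (Category.assoc _ _ _).symm, L.lift_comp_eqToHom]
    simp [fillerRetraction, hu, eqToHom_map]

theorem fillerMap_comp {x y z : B} (u : x ⟶ y) (v : y ⟶ z) :
    L.fillerMap hsq hS (u ≫ v) = L.fillerMap hsq hS u ≫ L.fillerMap hsq hS v := by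
  by_cases hu : IsIdLike (S.q.map u)
  · obtain ⟨hq, he⟩ := hu
    exact L.fillerMap_comp_of_isIdLike hsq hS hq he v
  · obtain ⟨w, hw, hfac⟩ := (hS u hu).exists
    rw [L.fillerMap_eq_of_factor hsq hS hw (comp_eq_of_factor v hfac),
      L.fillerMap_eq_of_factor hsq hS hw hfac]
    simp only [Category.assoc, L.counitLift_comp_fillerMap, S.q.map_comp, h.map_comp]

theorem map_counitLift (x : B) :
    g.map (L.counitLift hsq x) = counitImage hsq x ≫ eqToHom (L.obj_fillerObj hsq x).symm :=
  L.map_lift _ _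

theorem map_fillerRetraction {x : B} {w : x ⟶ S.f.obj (S.q.obj x)}
    (hw : S.ε.app x ≫ w = 𝟙 _) :
    g.map (L.fillerRetraction hsq hw) = eqToHom (L.obj_fillerObj hsq x) ≫ k.map w
      ≫ eqToHom (Functor.congr_obj hsq (S.q.obj x)) := by
  simp [fillerRetraction, L.map_lift, eqToHom_map]

theorem map_fillerMap {x y : B} (u : x ⟶ y) :
    g.map (L.fillerMap hsq hS u)
      = eqToHom (L.obj_fillerObj hsq x) ≫ k.map u ≫ eqToHom (L.obj_fillerObj hsq y).symm := by
  by_cases hu : IsIdLike (S.q.map u)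
  · obtain ⟨hq, he⟩ := hu
    simp [L.fillerMap_of_isIdLike hsq hS hq he, L.map_lift, eqToHom_map]
  · obtain ⟨w, hw, hfac⟩ := (hS u hu).exists
    have hk := Functor.congr_hom hsq (S.q.map u)
    dsimp only [Functor.comp_map] at hk
    rw [L.fillerMap_eq_of_factor hsq hS hw hfac]
    conv_rhs => rw [hfac]
    simp [L.map_fillerRetraction, L.map_counitLift, counitImage, hk]

theorem fillerObj_f (a : A) : L.fillerObj hsq (S.f.obj a) = h.obj a :=
  (L.tgt_eq_of_eq_eqToHom (counitImage_f hsq a)).trans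
    (congrArg h.obj (Functor.congr_obj S.qf a))

theorem counitLift_f (a : A) :
    L.counitLift hsq (S.f.obj a) = eqToHom ((congrArg h.obj (Functor.congr_obj S.qf a)).trans
      (L.fillerObj_f hsq a).symm) := by
  rw [counitLift, L.lift_eq_of_eq_eqToHom (counitImage_f hsq a)]

theorem fillerMap_f {a a' : A} (m : a ⟶ a') :
    L.fillerMap hsq hS (S.f.map m)
      = eqToHom (L.fillerObj_f hsq a) ≫ h.map m ≫ eqToHom (L.fillerObj_f hsq a').symm := by
  have hqf := Functor.congr_hom S.qf m
  dsimp only [Functor.comp_map, Functor.id_map] at hqf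
  have hsec : eqToHom (L.obj_fillerObj hsq (S.f.obj a))
      ≫ k.map (eqToHom (congrArg S.f.obj (Functor.congr_obj S.qf a).symm))
      = eqToHom ((L.obj_fillerObj hsq (S.f.obj a)).trans
          (congrArg (fun a => k.obj (S.f.obj a)) (Functor.congr_obj S.qf a).symm)) := by
    simp [eqToHom_map]
  rw [L.fillerMap_eq_of_factor hsq hS (counit_app_f_comp_eqToHom a) (map_f_eq_factor m),
    fillerRetraction, L.lift_eq_of_eq_eqToHom hsec]
  simp [L.counitLift_f, hqf, eqToHom_map]

noncomputable def filler : B ⥤ C where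
  obj := L.fillerObj hsq
  map := L.fillerMap hsq hS
  map_id := L.fillerMap_id hsq hS
  map_comp := L.fillerMap_comp hsq hS

theorem comp_filler : S.f ⋙ L.filler hsq hS = h :=
  CategoryTheory.Functor.ext (L.fillerObj_f hsq) fun _ _ m => L.fillerMap_f hsq hS m

theorem filler_comp : L.filler hsq hS ⋙ g = k :=
  CategoryTheory.Functor.ext (L.obj_fillerObj hsq) fun _ _ u => L.map_fillerMap hsq hS u

end DeltaLens

/-- Twisted coreflections lift against delta lenses: every commutative square from a
twisted coreflection to a delta lens admits a diagonal filler. -/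
theorem stmt16 {A B C D : Type} [SmallCategory A] [SmallCategory B]
    [SmallCategory C] [SmallCategory D]
    (S : SplitCoreflection A B) (hS : S.IsTwisted)
    {g : C ⥤ D} (L : DeltaLens g) (h : A ⥤ C) (k : B ⥤ D)
    (hsq : S.f ⋙ k = h ⋙ g) :
    ∃ j : B ⥤ C, S.f ⋙ j = h ∧ j ⋙ g = k :=
  ⟨L.filler hsq hS, L.comp_filler hsq hS, L.filler_comp hsq hS⟩
end

section
/- Bijective-on-objects functors are stable under pushout in Cat: if a square k ∘ f = g ∘ h is a pushout of categories and f is bijective-on-objects, then g is bijective-on-objects. -/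
open CategoryTheory

/-- In any category, pushout of an iso is an iso. -/
lemma isIso_of_isPushout_of_isIso {𝒞 : Type*} [Category 𝒞] {Z X Y P : 𝒞}
    {f : Z ⟶ X} {g : Z ⟶ Y} {h : X ⟶ P} {i : Y ⟶ P}
    (s : IsPushout f g h i) [IsIso f] : IsIso i := by
  refine ⟨s.desc (inv f ≫ g) (𝟙 Y) (by simp), s.inr_desc _ _ _, ?_⟩
  apply s.hom_ext
  · rw [← Category.assoc, s.inl_desc, Category.assoc, ← s.w, ← Category.assoc]
    simp
  · rw [← Category.assoc, s.inr_desc]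
    simp

/-- Bijective-on-objects functors are stable under pushout in `Cat`. -/
theorem stmt17 {A B C : Type} [SmallCategory A] [SmallCategory B] [SmallCategory C]
    (f : A ⥤ B) (h : A ⥤ C) (P : Cat.{0,0})
    (k : Cat.of B ⟶ P) (g : Cat.of C ⟶ P)
    (hpo : IsPushout (catHom f) (catHom h) k g)
    (hf : Function.Bijective f.obj) :
    Function.Bijective g.toFunctor.obj := by
  haveI : Limits.PreservesColimitsOfSize.{0,0} Cat.objects.{0,0} :=
    CategoryTheory.Codiscrete.adj.leftAdjoint_preservesColimits
  have hpo' := Cat.objects.map_isPushout hpo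
  haveI : IsIso (Cat.objects.map (catHom f)) := (isIso_iff_bijective _).2 (by exact hf)
  haveI := isIso_of_isPushout_of_isIso hpo'
  exact by exact (isIso_iff_bijective (Cat.objects.map g)).1 inferInstance
end

section
/- Given a commutative square k ∘ f = g ∘ h of functors in Cat, if f and g are bijective-on-objects and h and k are fully faithful, then the square is a pullback in Cat. -/
open CategoryTheory

variable {A B C D : Type} [SmallCategory A] [SmallCategory B] [SmallCategory C] [SmallCategory D]
  {E : Type} [SmallCategory E]

noncomputable def liftObj (f : A ⥤ B) (hf : Function.Bijective f.obj) (p : E ⥤ B) (e : E) : A :=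
  (Equiv.ofBijective f.obj hf).symm (p.obj e)

lemma liftObj_f (f : A ⥤ B) (hf : Function.Bijective f.obj) (p : E ⥤ B) (e : E) :
    f.obj (liftObj f hf p e) = p.obj e :=
  (Equiv.ofBijective f.obj hf).apply_symm_apply _

lemma liftObj_h (f : A ⥤ B) (g : C ⥤ D) (h : A ⥤ C) (k : B ⥤ D)
    (hsq : f ⋙ k = h ⋙ g) (hf : Function.Bijective f.obj) (hg : Function.Bijective g.obj)
    (p : E ⥤ B) (q : E ⥤ C) (hc : p ⋙ k = q ⋙ g) (e : E) :
    h.obj (liftObj f hf p e) = q.obj e := by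
  apply hg.injective
  have h1 := Functor.congr_obj hsq (liftObj f hf p e)
  have h2 := Functor.congr_obj hc e
  simp only [Functor.comp_obj] at h1 h2
  rw [← h1, liftObj_f, h2]

noncomputable def liftFunctor (f : A ⥤ B) (g : C ⥤ D) (h : A ⥤ C) (k : B ⥤ D)
    (hsq : f ⋙ k = h ⋙ g) (hf : Function.Bijective f.obj) (hg : Function.Bijective g.obj)
    [h.Full] [h.Faithful]
    (p : E ⥤ B) (q : E ⥤ C) (hc : p ⋙ k = q ⋙ g) : E ⥤ A where
  obj e := liftObj f hf p e
  map {e e'} m := h.preimage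
    (eqToHom (liftObj_h f g h k hsq hf hg p q hc e) ≫ q.map m ≫
      eqToHom (liftObj_h f g h k hsq hf hg p q hc e').symm)
  map_id e := by
    apply h.map_injective
    simp
  map_comp m m' := by
    apply h.map_injective
    simp

lemma liftFunctor_h (f : A ⥤ B) (g : C ⥤ D) (h : A ⥤ C) (k : B ⥤ D)
    (hsq : f ⋙ k = h ⋙ g) (hf : Function.Bijective f.obj) (hg : Function.Bijective g.obj)
    [h.Full] [h.Faithful]
    (p : E ⥤ B) (q : E ⥤ C) (hc : p ⋙ k = q ⋙ g) :
    liftFunctor f g h k hsq hf hg p q hc ⋙ h = q := by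
  refine CategoryTheory.Functor.ext (fun e => liftObj_h f g h k hsq hf hg p q hc e) (fun e e' m => ?_)
  simp [liftFunctor]

lemma liftFunctor_f (f : A ⥤ B) (g : C ⥤ D) (h : A ⥤ C) (k : B ⥤ D)
    (hsq : f ⋙ k = h ⋙ g) (hf : Function.Bijective f.obj) (hg : Function.Bijective g.obj)
    [h.Full] [h.Faithful] [k.Full] [k.Faithful]
    (p : E ⥤ B) (q : E ⥤ C) (hc : p ⋙ k = q ⋙ g) :
    liftFunctor f g h k hsq hf hg p q hc ⋙ f = p := by
  refine CategoryTheory.Functor.ext (fun e => liftObj_f f hf p e) (fun e e' m => ?_)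
  apply k.map_injective
  have h1 := Functor.congr_hom hsq ((liftFunctor f g h k hsq hf hg p q hc).map m)
  have h2 := Functor.congr_hom hc m
  simp only [Functor.comp_obj, Functor.comp_map] at h1 h2
  simp only [Functor.comp_map]
  rw [h1]
  simp [liftFunctor, h2, eqToHom_map]
  erw [eqToHom_map, eqToHom_trans_assoc, eqToHom_trans, eqToHom_trans]

lemma liftFunctor_uniq (f : A ⥤ B) (g : C ⥤ D) (h : A ⥤ C) (k : B ⥤ D)
    (hsq : f ⋙ k = h ⋙ g) (hf : Function.Bijective f.obj) (hg : Function.Bijective g.obj)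
    [h.Full] [h.Faithful]
    (p : E ⥤ B) (q : E ⥤ C) (hc : p ⋙ k = q ⋙ g)
    (l : E ⥤ A) (hl1 : l ⋙ f = p) (hl2 : l ⋙ h = q) :
    l = liftFunctor f g h k hsq hf hg p q hc := by
  have hobj : ∀ e, l.obj e = liftObj f hf p e := by
    intro e
    apply hf.injective
    rw [liftObj_f]
    exact Functor.congr_obj hl1 e
  refine CategoryTheory.Functor.ext hobj (fun e e' m => ?_)
  apply h.map_injective
  have h2 := Functor.congr_hom hl2 m
  simp only [Functor.comp_obj, Functor.comp_map] at h2
  simp [h2, liftFunctor, eqToHom_map]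
  erw [eqToHom_map]
  simp

/-- A commutative square of functors with bijective-on-objects verticals and fully
faithful horizontals is a pullback in `Cat`. -/
theorem stmt18 {A B C D : Type} [SmallCategory A] [SmallCategory B]
    [SmallCategory C] [SmallCategory D]
    (f : A ⥤ B) (g : C ⥤ D) (h : A ⥤ C) (k : B ⥤ D)
    (hsq : f ⋙ k = h ⋙ g)
    (hf : Function.Bijective f.obj) (hg : Function.Bijective g.obj)
    [h.Full] [h.Faithful] [k.Full] [k.Faithful] :
    IsPullback (catHom f) (catHom h) (catHom k) (catHom g) := by
  have w : catHom f ≫ catHom k = catHom h ≫ catHom g := congrArg Functor.toCatHom hsq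
  exact IsPullback.of_isLimit (Limits.PullbackCone.IsLimit.mk w
    (fun s => Cat.Hom.ofFunctor (liftFunctor (A := A) f g h k hsq hf hg s.fst.toFunctor s.snd.toFunctor
      (congrArg Cat.Hom.toFunctor s.condition)))
    (fun s => Cat.ext (liftFunctor_f f g h k hsq hf hg s.fst.toFunctor s.snd.toFunctor
      (congrArg Cat.Hom.toFunctor s.condition)))
    (fun s => Cat.ext (liftFunctor_h f g h k hsq hf hg s.fst.toFunctor s.snd.toFunctor
      (congrArg Cat.Hom.toFunctor s.condition)))
    (fun s m hm1 hm2 => Cat.ext (liftFunctor_uniq f g h k hsq hf hg s.fst.toFunctor s.snd.toFunctor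
      (congrArg Cat.Hom.toFunctor s.condition) m.toFunctor (congrArg Cat.Hom.toFunctor hm1)
      (congrArg Cat.Hom.toFunctor hm2))))
end

section
/- Let f : A ⟶ B be a functor, and let Ef be the category whose objects are pairs (a, u : f a ⟶ b) and whose morphisms (a₁, u₁) ⟶ (a₂, u₂) are either (sort 1) morphisms v : b₁ ⟶ b₂ in B with v ∘ u₁ = u₂ and a₁ = a₂, or (sort 2) pairs (v : b₁ ⟶ f a₁, w : a₁ ⟶ a₂) with v ∘ u₁ = 1 and w not an identity, where the codomain data is u₂ : f a₂ ⟶ b₂. Then the functor Rf : Ef ⟶ B sending (a, u : f a ⟶ b) to b, sort-1 morphisms v to v, and sort-2 morphisms (v, w) to u₂ ∘ f(w) ∘ v, admits a delta lens structure whose chosen lift of (a₁,u₁) along t : b₁ ⟶ b₂ is the sort-1 morphism t : (a₁, u₁) ⟶ (a₁, t ∘ u₁). -/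
open CategoryTheory

variable {A B : Type} [SmallCategory A] [SmallCategory B]

/-- Objects of `Ef`: pairs `(a, u : f a ⟶ b)`. -/
structure EfObj (f : A ⥤ B) where
  a : A
  b : B
  u : f.obj a ⟶ b

/-- Morphisms of `Ef`: either (sort 1) a morphism `v : b₁ ⟶ b₂` in `B` with `a₁ = a₂`
and `v ∘ u₁ = u₂`, or (sort 2) a pair `(v : b₁ ⟶ f a₁, w : a₁ ⟶ a₂)` with
`v ∘ u₁ = 1` and `w` not an identity. -/
def EfHom (f : A ⥤ B) (e₁ e₂ : EfObj f) : Type :=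
  (Σ' _ : e₁.a = e₂.a,
    {v : e₁.b ⟶ e₂.b // ∀ h : e₁.a = e₂.a, e₁.u ≫ v = eqToHom (congrArg f.obj h) ≫ e₂.u})
  ⊕ {p : (e₁.b ⟶ f.obj e₁.a) × (e₁.a ⟶ e₂.a) //
      e₁.u ≫ p.1 = 𝟙 (f.obj e₁.a) ∧ ¬ IsIdLike p.2}

theorem isIdLike_eqToHom_comp {C : Type*} [Category C] {x y z : C} (h : x = y)
    (w : y ⟶ z) : IsIdLike (eqToHom h ≫ w) ↔ IsIdLike w := by
  subst h; simp [IsIdLike]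

theorem isIdLike_comp_eqToHom {C : Type*} [Category C] {x y z : C} (w : x ⟶ y)
    (h : y = z) : IsIdLike (w ≫ eqToHom h) ↔ IsIdLike w := by
  subst h; simp [IsIdLike]

open Classical in
/-- Composition in `Ef`. -/
noncomputable def EfComp (f : A ⥤ B) {e₁ e₂ e₃ : EfObj f} :
    EfHom f e₁ e₂ → EfHom f e₂ e₃ → EfHom f e₁ e₃
  | Sum.inl ⟨h₁, v₁⟩, Sum.inl ⟨h₂, v₂⟩ =>
      Sum.inl ⟨h₁.trans h₂, v₁.1 ≫ v₂.1, by
        intro h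
        rw [← Category.assoc, v₁.2 h₁, Category.assoc, v₂.2 h₂, ← Category.assoc,
          eqToHom_trans]⟩
  | Sum.inl ⟨h₁, v₁⟩, Sum.inr ⟨p₂, hp₂⟩ =>
      Sum.inr ⟨(v₁.1 ≫ p₂.1 ≫ eqToHom (congrArg f.obj h₁.symm), eqToHom h₁ ≫ p₂.2), by
        constructor
        · show e₁.u ≫ ↑v₁ ≫ p₂.1 ≫ eqToHom (congrArg f.obj h₁.symm) = 𝟙 (f.obj e₁.a)
          rw [← Category.assoc, v₁.2 h₁, Category.assoc, ← Category.assoc e₂.u p₂.1,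
            hp₂.1, Category.id_comp, eqToHom_trans, eqToHom_refl]
        · show ¬ IsIdLike (eqToHom h₁ ≫ p₂.2)
          rw [isIdLike_eqToHom_comp]
          exact hp₂.2⟩
  | Sum.inr ⟨p₁, hp₁⟩, Sum.inl ⟨h₂, v₂⟩ =>
      Sum.inr ⟨(p₁.1, p₁.2 ≫ eqToHom h₂), by
        refine ⟨hp₁.1, ?_⟩
        show ¬ IsIdLike (p₁.2 ≫ eqToHom h₂)
        rw [isIdLike_comp_eqToHom]
        exact hp₁.2⟩
  | Sum.inr ⟨p₁, hp₁⟩, Sum.inr ⟨p₂, hp₂⟩ =>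
      if hw : IsIdLike (p₁.2 ≫ p₂.2) then
        Sum.inl ⟨hw.choose, p₁.1 ≫ eqToHom (congrArg f.obj hw.choose) ≫ e₃.u, by
          intro h
          rw [← Category.assoc, hp₁.1]
          simp⟩
      else
        Sum.inr ⟨(p₁.1, p₁.2 ≫ p₂.2), hp₁.1, hw⟩

theorem efinl_eq {f : A ⥤ B} {e₁ e₂ : EfObj f} {h h' : e₁.a = e₂.a}
    {v v' : {v : e₁.b ⟶ e₂.b // ∀ h : e₁.a = e₂.a,
      e₁.u ≫ v = eqToHom (congrArg f.obj h) ≫ e₂.u}}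
    (hv : v.1 = v'.1) :
    (Sum.inl ⟨h, v⟩ : EfHom f e₁ e₂) = Sum.inl ⟨h', v'⟩ := by
  have hvv : v = v' := Subtype.ext hv
  subst hvv
  rfl

theorem efinr_eq {f : A ⥤ B} {e₁ e₂ : EfObj f}
    {p p' : (e₁.b ⟶ f.obj e₁.a) × (e₁.a ⟶ e₂.a)} {hp hp'}
    (h : p = p') :
    (Sum.inr ⟨p, hp⟩ : EfHom f e₁ e₂) = Sum.inr ⟨p', hp'⟩ := by
  subst h
  rfl

/-- The category `Ef` associated to a functor `f : A ⥤ B`. -/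
noncomputable instance EfCategory (f : A ⥤ B) : Category (EfObj f) where
  Hom := EfHom f
  id e := Sum.inl ⟨rfl, 𝟙 e.b, by intro h; simp⟩
  comp := EfComp f
  id_comp := by
    rintro e₁ e₂ (⟨h, v⟩ | ⟨p, hp⟩) <;>
      simp_all [EfComp, Subtype.ext_iff, isIdLike_eqToHom_comp, IsIdLike] <;> rfl
  comp_id := by
    rintro e₁ e₂ (⟨h, v⟩ | ⟨p, hp⟩) <;>
      simp_all [EfComp, Subtype.ext_iff, isIdLike_comp_eqToHom, IsIdLike] <;> rfl
  assoc := by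
    rintro e₁ e₂ e₃ e₄ (⟨h₁, v₁⟩ | ⟨p₁, hp₁⟩) (⟨h₂, v₂⟩ | ⟨p₂, hp₂⟩) (⟨h₃, v₃⟩ | ⟨p₃, hp₃⟩) <;>
        simp only [EfComp]
    all_goals delta EfHom
    · exact efinl_eq (by simp)
    · exact efinr_eq (by simp)
    · exact efinr_eq (by simp)
    · -- lrr
      have hiff : IsIdLike ((eqToHom h₁ ≫ p₂.2) ≫ p₃.2) ↔ IsIdLike (p₂.2 ≫ p₃.2) := by
        rw [Category.assoc, isIdLike_eqToHom_comp]
      by_cases hw : IsIdLike (p₂.2 ≫ p₃.2)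
      · rw [dif_pos (hiff.mpr hw), dif_pos hw]
        exact efinl_eq (by simp)
      · rw [dif_neg (fun hc => hw (hiff.mp hc)), dif_neg hw]
        exact efinr_eq (by simp [Prod.ext_iff])
    · exact efinr_eq (by simp)
    · -- rlr
      have hiff : IsIdLike ((p₁.2 ≫ eqToHom h₂) ≫ p₃.2) ↔
          IsIdLike (p₁.2 ≫ eqToHom h₂ ≫ p₃.2) := by rw [Category.assoc]
      by_cases hw : IsIdLike (p₁.2 ≫ eqToHom h₂ ≫ p₃.2)
      · rw [dif_pos (hiff.mpr hw), dif_pos hw]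
      · rw [dif_neg (fun hc => hw (hiff.mp hc)), dif_neg hw]
        exact efinr_eq (Prod.ext rfl (by simp))
    · -- rrl
      have hiff : IsIdLike (p₁.2 ≫ p₂.2 ≫ eqToHom h₃) ↔ IsIdLike (p₁.2 ≫ p₂.2) := by
        rw [← Category.assoc, isIdLike_comp_eqToHom]
      by_cases hw : IsIdLike (p₁.2 ≫ p₂.2)
      · rw [dif_pos hw, dif_pos (hiff.mpr hw)]
        have hv₃ := v₃.2 h₃
        exact efinl_eq (by simp [hv₃])
      · rw [dif_neg hw, dif_neg (fun hc => hw (hiff.mp hc))]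
        exact efinr_eq (by simp [Prod.ext_iff])
    · -- rrr
      by_cases hw12 : IsIdLike (p₁.2 ≫ p₂.2) <;> by_cases hw23 : IsIdLike (p₂.2 ≫ p₃.2)
      · -- both identity-like
        rw [dif_pos hw12, dif_pos hw23]
        dsimp only
        have hs12 := hw12.choose_spec
        have hs23 := hw23.choose_spec
        refine efinr_eq ?_
        refine Prod.ext ?_ ?_
        · show (p₁.1 ≫ eqToHom (congrArg f.obj hw12.choose) ≫ e₃.u) ≫ p₃.1 ≫
            eqToHom (congrArg f.obj hw12.choose.symm) = p₁.1
          simp only [Category.assoc]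
          rw [← Category.assoc e₃.u p₃.1, hp₃.1, Category.id_comp, eqToHom_trans,
            eqToHom_refl, Category.comp_id]
        · show eqToHom hw12.choose ≫ p₃.2 = p₁.2 ≫ eqToHom hw23.choose
          rw [← hs12, ← hs23]
          simp
      · rw [dif_pos hw12, dif_neg hw23]
        have hs12 := hw12.choose_spec
        have hnid : ¬ IsIdLike ((p₁.2 ≫ p₂.2) ≫ p₃.2) := by
          rw [hs12, isIdLike_eqToHom_comp]
          exact hp₃.2
        dsimp only
        rw [dif_neg (fun hc => hnid (by rwa [Category.assoc]))]
        refine efinr_eq (Prod.ext ?_ ?_)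
        · show (p₁.1 ≫ eqToHom (congrArg f.obj hw12.choose) ≫ e₃.u) ≫ p₃.1 ≫
            eqToHom (congrArg f.obj hw12.choose.symm) = p₁.1
          simp only [Category.assoc]
          rw [← Category.assoc e₃.u p₃.1, hp₃.1, Category.id_comp, eqToHom_trans,
            eqToHom_refl, Category.comp_id]
        · show eqToHom hw12.choose ≫ p₃.2 = p₁.2 ≫ p₂.2 ≫ p₃.2
          rw [← hs12]
          simp
      · rw [dif_neg hw12, dif_pos hw23]
        have hs23 := hw23.choose_spec
        have hnid : ¬ IsIdLike ((p₁.2 ≫ p₂.2) ≫ p₃.2) := by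
          rw [Category.assoc, hs23, isIdLike_comp_eqToHom]
          exact hp₁.2
        dsimp only
        rw [dif_neg hnid]
        refine efinr_eq (Prod.ext rfl ?_)
        show (p₁.2 ≫ p₂.2) ≫ p₃.2 = p₁.2 ≫ eqToHom hw23.choose
        rw [← hs23]
        simp
      · rw [dif_neg hw12, dif_neg hw23]
        dsimp only
        by_cases hw : IsIdLike ((p₁.2 ≫ p₂.2) ≫ p₃.2)
        · rw [dif_pos hw, dif_pos (by rwa [← Category.assoc] : IsIdLike (p₁.2 ≫ p₂.2 ≫ p₃.2))]
        · rw [dif_neg hw, dif_neg (fun hc => hw (by rwa [Category.assoc]))]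
          exact efinr_eq (Prod.ext rfl (by simp))

/-- The functor `Rf : Ef ⥤ B`. -/
noncomputable def EfR (f : A ⥤ B) : EfObj f ⥤ B where
  obj e := e.b
  map {e₁ e₂} g :=
    match g with
    | Sum.inl v => v.2.1
    | Sum.inr p => p.1.1 ≫ f.map p.1.2 ≫ e₂.u
  map_id := by intro e; rfl
  map_comp := by
    rintro e₁ e₂ e₃ (⟨h₁, v₁⟩ | ⟨p₁, hp₁⟩) (⟨h₂, v₂⟩ | ⟨p₂, hp₂⟩)
    · rfl
    · simp [EfCategory, CategoryStruct.comp, EfComp, eqToHom_map]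
    · have hv := v₂.2 h₂
      simp [EfCategory, CategoryStruct.comp, EfComp, eqToHom_map, hv]
    · by_cases hw : IsIdLike (p₁.2 ≫ p₂.2)
      · have hspec := hw.choose_spec
        simp only [EfCategory, CategoryStruct.comp, EfComp]
        delta EfHom
        simp only [dif_pos hw]
        simp only [Category.assoc]
        rw [← Category.assoc e₂.u p₂.1, hp₂.1, Category.id_comp,
          ← Category.assoc (f.map p₁.2) (f.map p₂.2), ← Functor.map_comp, hspec,
          eqToHom_map]
      · simp only [EfCategory, CategoryStruct.comp, EfComp]
        delta EfHom
        simp only [dif_neg hw]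
        simp only [Category.assoc]
        rw [← Category.assoc e₂.u p₂.1, hp₂.1, Category.id_comp]
        simp [Functor.map_comp]

theorem ef_eqToHom {f : A ⥤ B} {e₁ e₂ : EfObj f} (h : e₁ = e₂) :
    (eqToHom h : e₁ ⟶ e₂) =
      Sum.inl ⟨congrArg EfObj.a h, eqToHom (congrArg EfObj.b h),
        by intro h'; cases h; simp⟩ := by
  cases h
  exact efinl_eq (by simp)

section MyLens

variable (f : A ⥤ B)

/-- target of the chosen lift -/
def myTgt (e : EfObj f) {b : B} (t : (EfR f).obj e ⟶ b) : EfObj f :=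
  EfObj.mk e.a b (e.u ≫ t)

/-- the chosen lift -/
noncomputable def myLift (e : EfObj f) {b : B} (t : (EfR f).obj e ⟶ b) :
    e ⟶ myTgt f e t :=
  Sum.inl ⟨rfl, t, by intro h; simp [myTgt]; exact (Category.id_comp _).symm⟩

theorem myTgt_id (e : EfObj f) : myTgt f e (𝟙 ((EfR f).obj e)) = e := by
  cases e; simp [myTgt, EfR]

theorem myTgt_comp (e : EfObj f) {b c : B} (u : (EfR f).obj e ⟶ b) (v : b ⟶ c) :
    myTgt f e (u ≫ v) = myTgt f (myTgt f e u) (eqToHom rfl ≫ v) := by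
  simp [myTgt]
  show e.u ≫ u ≫ v = (e.u ≫ u) ≫ 𝟙 _ ≫ v
  simp
  exact (Category.assoc _ _ _).symm

theorem myLift_id (e : EfObj f) :
    myLift f e (𝟙 ((EfR f).obj e)) = eqToHom (myTgt_id f e).symm := by
  rw [ef_eqToHom ((myTgt_id f e).symm)]
  unfold myLift
  exact efinl_eq (f := f) (e₁ := e) (e₂ := myTgt f e (𝟙 ((EfR f).obj e))) rfl

theorem myLift_comp (e : EfObj f) {b c : B} (u : (EfR f).obj e ⟶ b) (v : b ⟶ c) :
    myLift f e (u ≫ v) =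
      myLift f e u ≫ myLift f (myTgt f e u) (eqToHom rfl ≫ v) ≫
        eqToHom (myTgt_comp f e u v).symm := by
  rw [ef_eqToHom ((myTgt_comp f e u v).symm)]
  show myLift f e (u ≫ v) = EfComp f (myLift f e u) (EfComp f (myLift f (myTgt f e u) _) (Sum.inl _))
  unfold myLift
  simp only [EfComp]
  exact efinl_eq (f := f) (e₁ := e) (e₂ := myTgt f e (u ≫ v)) (by show u ≫ v = u ≫ (𝟙 _ ≫ v) ≫ 𝟙 _; simp)

end MyLens

/-- The functor `Rf : Ef ⟶ B` admits a delta lens structure whose chosen lift of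
`(a₁, u₁)` along `t : b₁ ⟶ b₂` is the sort-1 morphism `t : (a₁, u₁) ⟶ (a₁, t ∘ u₁)`. -/
theorem stmt19 (f : A ⥤ B) :
    ∃ L : DeltaLens (EfR f),
      ∀ (e : EfObj f) (b : B) (t : (EfR f).obj e ⟶ b),
        ∃ h : L.tgt e t = EfObj.mk e.a b (e.u ≫ t),
          L.lift e t ≫ eqToHom h =
            (Sum.inl ⟨rfl, t, by intro h; simp⟩ : EfHom f e (EfObj.mk e.a b (e.u ≫ t))) := by
  refine ⟨{
    tgt := fun e b t => myTgt f e t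
    lift := fun e b t => myLift f e t
    tgt_obj := fun e b t => rfl
    map_lift := fun e b t => by simp [myLift, EfR]; exact (Category.comp_id _).symm
    tgt_id := myTgt_id f
    lift_id := myLift_id f
    tgt_comp := fun e b c u v => myTgt_comp f e u v
    lift_comp := fun e b c u v => myLift_comp f e u v }, ?_⟩
  intro e b t
  refine ⟨rfl, ?_⟩
  show myLift f e t ≫ 𝟙 _ = _
  rw [Category.comp_id]
  exact efinl_eq (f := f) (e₁ := e) (e₂ := EfObj.mk e.a b (e.u ≫ t)) rfl
end
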